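/- arXiv:2501.17743 — 3 statements merged into one kernel-verified Lean document; each statement's English description precedes it below -/
import Mathlib

section
/- For the distributed-delay Cucker-Smale system, for each v ∈ R^d and S ≥ 0, one has min_{j} min_{s∈[S-τ̄,S]} ⟨v_j(s), v⟩ ≤ ⟨v_i(t), v⟩ ≤ max_j max_{s∈[S-τ̄,S]} ⟨v_j(s), v⟩ for all t ≥ S - τ̄ and all i = 1,...,N. -/
set_option maxHeartbeats 1000000


open scoped BigOperators RealInnerProductSpace

/-- The Cucker-Smale system with distributed time delay and communication failures. -/
structure CSD (d N : ℕ) where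
  /-- positions -/
  x : Fin N → ℝ → EuclideanSpace ℝ (Fin d)
  /-- velocities -/
  v : Fin N → ℝ → EuclideanSpace ℝ (Fin d)
  /-- influence function -/
  ψ : ℝ → ℝ
  /-- weight function modelling communication failures -/
  α : ℝ → ℝ
  /-- lower time delay function -/
  τ1 : ℝ → ℝ
  /-- upper time delay function -/
  τ2 : ℝ → ℝ
  /-- bound on the time delay -/
  τbar : ℝ
  /-- delay kernel -/
  β : ℝ → ℝ
  τbar_nonneg : 0 ≤ τbar
  τ1_cont : Continuous τ1
  τ2_cont : Continuous τ2
  τ_mem : ∀ t, 0 ≤ t → 0 ≤ τ1 t ∧ τ1 t < τ2 t ∧ τ2 t ≤ τbar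
  β_cont : Continuous β
  β_pos : ∀ s ∈ Set.Icc (0:ℝ) τbar, 0 < β s
  ψ_pos : ∀ r, 0 < ψ r
  ψ_cont : Continuous ψ
  ψ_bdd : BddAbove (Set.range ψ)
  α_meas : Measurable α
  α_mem : ∀ t, 0 ≤ t → α t ∈ Set.Icc (0:ℝ) 1
  x_cont : ∀ i, Continuous (x i)
  v_cont : ∀ i, Continuous (v i)
  x_deriv : ∀ i, ∀ t, 0 < t → HasDerivAt (x i) (v i t) t
  v_deriv : ∀ i, ∀ t, 0 < t → HasDerivAt (v i)
    ((∫ s in τ1 t..τ2 t, β s)⁻¹ •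
      ∑ j ∈ Finset.univ.erase i,
        α t • ∫ s in (t - τ2 t)..(t - τ1 t),
          (β (t - s) * (ψ ‖x i t - x j s‖ / ((N : ℝ) - 1))) • (v j s - v i t)) t

namespace CSD

variable {d N : ℕ}

/-- communication rates -/
noncomputable def c (S : CSD d N) (i j : Fin N) (t s : ℝ) : ℝ :=
  S.ψ ‖S.x i t - S.x j s‖ / ((N : ℝ) - 1)

/-- the normalization factor `h` -/
noncomputable def h (S : CSD d N) (t : ℝ) : ℝ := ∫ s in S.τ1 t..S.τ2 t, S.β s

/-- `K = ‖ψ‖_∞` -/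
noncomputable def K (S : CSD d N) : ℝ := sSup (Set.range S.ψ)

/-- position diameter -/
noncomputable def dX (S : CSD d N) (t : ℝ) : ℝ :=
  sSup {r | ∃ i j : Fin N, r = ‖S.x i t - S.x j t‖}

/-- velocity diameter -/
noncomputable def dV (S : CSD d N) (t : ℝ) : ℝ :=
  sSup {r | ∃ i j : Fin N, r = ‖S.v i t - S.v j t‖}

/-- generalized velocity diameters `F_n` -/
noncomputable def Fn (S : CSD d N) (T : ℝ) (n : ℕ) : ℝ :=
  sSup {r | ∃ i j : Fin N, ∃ s ∈ Set.Icc ((n : ℝ) * T - S.τbar) ((n : ℝ) * T),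
    ∃ u ∈ Set.Icc ((n : ℝ) * T - S.τbar) ((n : ℝ) * T), r = ‖S.v i s - S.v j u‖}

/-- `R_0^V`, uniform bound of the initial velocities -/
noncomputable def R0V (S : CSD d N) : ℝ :=
  sSup {r | ∃ j : Fin N, ∃ s ∈ Set.Icc (-S.τbar) 0, r = ‖S.v j s‖}

/-- `N_0^X` -/
noncomputable def N0X (S : CSD d N) : ℝ :=
  sSup {r | ∃ l : Fin N, ∃ s ∈ Set.Icc (-S.τbar) 0, ∃ u ∈ Set.Icc (-S.τbar) 0,
    r = ‖S.x l s - S.x l u‖}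

/-- the auxiliary function `η` -/
noncomputable def eta (S : CSD d N) (t : ℝ) : ℝ :=
  sInf (S.ψ '' Set.Icc 0 (S.τbar * S.R0V + S.N0X + sSup (S.dX '' Set.Icc (-S.τbar) t)))

end CSD
private lemma csd_upper {d N : ℕ} (S : CSD d N) (hN : 2 ≤ N)
    (w : EuclideanSpace ℝ (Fin d)) (S0 : ℝ) (hS0 : 0 ≤ S0) :
    ∀ t, S0 - S.τbar ≤ t → ∀ i : Fin N,
      ⟪S.v i t, w⟫ ≤
        sSup {r | ∃ j : Fin N, ∃ s ∈ Set.Icc (S0 - S.τbar) S0, r = ⟪S.v j s, w⟫} := by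
  set f : Fin N → ℝ → ℝ := fun j t => ⟪S.v j t, w⟫ with hf
  set A : Set ℝ := {r | ∃ j : Fin N, ∃ s ∈ Set.Icc (S0 - S.τbar) S0, r = f j s} with hA
  set M : ℝ := sSup A with hM
  have hNR : (2 : ℝ) ≤ (N : ℝ) := by exact_mod_cast hN
  have hfc : ∀ j, Continuous (f j) := fun j => (S.v_cont j).inner continuous_const
  -- BddAbove
  have hbdd : BddAbove A := by
    have hsub : A ⊆ ⋃ j : Fin N, f j '' Set.Icc (S0 - S.τbar) S0 := by
      rintro r ⟨j, s, hs, rfl⟩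
      exact Set.mem_iUnion.mpr ⟨j, s, hs, rfl⟩
    exact BddAbove.mono hsub
      (isCompact_iUnion fun j => isCompact_Icc.image (hfc j)).bddAbove
  have hmem : ∀ j : Fin N, ∀ s ∈ Set.Icc (S0 - S.τbar) S0, f j s ≤ M :=
    fun j s hs => le_csSup hbdd ⟨j, s, hs, rfl⟩
  -- the key barrier lemma
  have key : ∀ ε : ℝ, 0 < ε → ∀ t, S0 ≤ t → ∀ i : Fin N,
      f i t < M + ε * Real.exp (t - S0) := by
    intro ε hε
    by_contra hcon
    push_neg at hcon
    obtain ⟨t0, ht0, i0, hi0⟩ := hcon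
    set E : Set ℝ := {t | S0 ≤ t ∧ ∃ i : Fin N, M + ε * Real.exp (t - S0) ≤ f i t} with hE
    have hBcont : Continuous fun u : ℝ => M + ε * Real.exp (u - S0) := by
      continuity
    have hEclosed : IsClosed E := by
      have : E = {t | S0 ≤ t} ∩ ⋃ i : Fin N, {t | M + ε * Real.exp (t - S0) ≤ f i t} := by
        ext t
        simp only [hE, Set.mem_setOf_eq, Set.mem_inter_iff, Set.mem_iUnion]
      rw [this]
      exact (isClosed_le continuous_const continuous_id).inter
        (isClosed_iUnion_of_finite fun i => isClosed_le hBcont (hfc i))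
    have hEne : E.Nonempty := ⟨t0, ht0, i0, hi0⟩
    have hEbdd : BddBelow E := ⟨S0, fun x hx => hx.1⟩
    set T : ℝ := sInf E with hT
    have hTmem : T ∈ E := hEclosed.csInf_mem hEne hEbdd
    obtain ⟨hTS0, i, hi⟩ := hTmem
    have hS0T : S0 < T := by
      rcases lt_or_eq_of_le hTS0 with h | h
      · exact h
      · exfalso
        rw [← h] at hi
        have h1 : f i S0 ≤ M := hmem i S0 ⟨by linarith [S.τbar_nonneg], le_rfl⟩
        simp only [sub_self, Real.exp_zero, mul_one] at hi
        linarith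
    have hTpos : 0 < T := lt_of_le_of_lt hS0 hS0T
    -- all values up to T are below the barrier value at T
    have hall : ∀ j : Fin N, ∀ s, S0 - S.τbar ≤ s → s ≤ T →
        f j s ≤ M + ε * Real.exp (T - S0) := by
      have hexpTpos : 0 < ε * Real.exp (T - S0) := mul_pos hε (Real.exp_pos _)
      intro j s hs1 hs2
      rcases le_or_gt s S0 with hsS0 | hsS0
      · have := hmem j s ⟨hs1, hsS0⟩
        linarith
      rcases lt_or_eq_of_le hs2 with hsT | hsT
      · -- S0 < s < T : s ∉ E
        have hsE : s ∉ E := fun hmemE => absurd (csInf_le hEbdd hmemE) (not_le.mpr hsT)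
        simp only [hE, Set.mem_setOf_eq, not_and, not_exists, not_le] at hsE
        have h1 := hsE hsS0.le j
        have h2 : Real.exp (s - S0) ≤ Real.exp (T - S0) := Real.exp_le_exp.mpr (by linarith)
        nlinarith
      · -- s = T
        subst hsT
        by_contra hcon2
        push_neg at hcon2
        have hev1 : ∀ᶠ u in nhds T, M + ε * Real.exp (u - S0) < f j u :=
          hBcont.continuousAt.eventually_lt (hfc j).continuousAt hcon2
        have hev2 : ∀ᶠ u in nhds T, S0 < u := eventually_gt_nhds hS0T
        have hev3 : ∀ᶠ u in nhdsWithin T (Set.Iio T), u ∈ Set.Iio T :=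
          eventually_mem_nhdsWithin
        have hev : ∀ᶠ u in nhdsWithin T (Set.Iio T),
            (M + ε * Real.exp (u - S0) < f j u ∧ S0 < u) ∧ u ∈ Set.Iio T :=
          (((hev1.and hev2).filter_mono nhdsWithin_le_nhds).and hev3)
        obtain ⟨u, ⟨hu1, hu2⟩, hu3⟩ := hev.exists
        have huE : u ∈ E := ⟨hu2.le, j, hu1.le⟩
        exact absurd (csInf_le hEbdd huE) (not_le.mpr hu3)
    have hfiT : f i T = M + ε * Real.exp (T - S0) :=
      le_antisymm (hall i T (by linarith [S.τbar_nonneg]) le_rfl) hi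
    -- derivative of f i at T
    have hDv := S.v_deriv i T hTpos
    set Dvec : EuclideanSpace ℝ (Fin d) :=
      (∫ s in S.τ1 T..S.τ2 T, S.β s)⁻¹ •
        ∑ j ∈ Finset.univ.erase i,
          S.α T • ∫ s in (T - S.τ2 T)..(T - S.τ1 T),
            (S.β (T - s) * (S.ψ ‖S.x i T - S.x j s‖ / ((N : ℝ) - 1))) •
              (S.v j s - S.v i T) with hDvec
    have hfD : HasDerivAt (f i) (⟪Dvec, w⟫) T := by
      have := (HasDerivAt.inner ℝ hDv (hasDerivAt_const T w))
      simpa using this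
    -- derivative is nonpositive
    obtain ⟨hτ1n, hτ12, hτ2b⟩ := S.τ_mem T hTpos.le
    have hDle : ⟪Dvec, w⟫ ≤ 0 := by
      rw [hDvec, real_inner_smul_left, sum_inner]
      have hhnn : (0 : ℝ) ≤ (∫ s in S.τ1 T..S.τ2 T, S.β s)⁻¹ := by
        apply inv_nonneg.mpr
        apply intervalIntegral.integral_nonneg hτ12.le
        intro u hu
        exact (S.β_pos u ⟨le_trans hτ1n hu.1, le_trans hu.2 hτ2b⟩).le
      apply mul_nonpos_of_nonneg_of_nonpos hhnn
      apply Finset.sum_nonpos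
      intro j _
      rw [real_inner_smul_left]
      have hαnn : 0 ≤ S.α T := (S.α_mem T hTpos.le).1
      apply mul_nonpos_of_nonneg_of_nonpos hαnn
      -- move inner inside the integral
      have hGcont : Continuous fun s =>
          (S.β (T - s) * (S.ψ ‖S.x i T - S.x j s‖ / ((N : ℝ) - 1))) •
            (S.v j s - S.v i T) := by
        apply Continuous.fun_smul
        · exact (S.β_cont.comp (continuous_const.sub continuous_id)).mul
            ((S.ψ_cont.comp ((continuous_const.sub (S.x_cont j)).norm)).div_const _)
        · exact (S.v_cont j).sub continuous_const
      have hGint := hGcont.intervalIntegrable (μ := MeasureTheory.volume) (T - S.τ2 T) (T - S.τ1 T)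
      have hcomm := ContinuousLinearMap.intervalIntegral_comp_comm (innerSL ℝ w) hGint
      have hsymm : ∀ u : EuclideanSpace ℝ (Fin d), ⟪u, w⟫ = (innerSL ℝ w) u := by
        intro u; rw [innerSL_apply_apply]; exact real_inner_comm w u
      rw [hsymm, ← hcomm]
      have hab : T - S.τ2 T ≤ T - S.τ1 T := by linarith
      rw [← neg_nonneg, ← intervalIntegral.integral_neg]
      apply intervalIntegral.integral_nonneg hab
      intro u hu
      have hc : 0 ≤ S.β (T - u) * (S.ψ ‖S.x i T - S.x j u‖ / ((N : ℝ) - 1)) := by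
        apply mul_nonneg
        · exact (S.β_pos (T - u) ⟨by linarith [hu.1, hu.2], by linarith [hu.1, hu.2]⟩).le
        · exact div_nonneg (S.ψ_pos _).le (by linarith)
      have hfju : f j u ≤ f i T := by
        rw [hfiT]
        exact hall j u (by linarith [hu.1]) (by linarith [hu.2])
      have : (innerSL ℝ w)
          ((S.β (T - u) * (S.ψ ‖S.x i T - S.x j u‖ / ((N : ℝ) - 1))) •
            (S.v j u - S.v i T)) =
          (S.β (T - u) * (S.ψ ‖S.x i T - S.x j u‖ / ((N : ℝ) - 1))) * (f j u - f i T) := by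
        rw [innerSL_apply_apply, real_inner_smul_right, inner_sub_right]
        simp only [hf]
        rw [real_inner_comm w (S.v j u), real_inner_comm w (S.v i T)]
      rw [this]
      nlinarith
    -- the barrier function and the touching-point contradiction
    set g : ℝ → ℝ := fun u => f i u - (M + ε * Real.exp (u - S0)) with hg
    have hgD : HasDerivAt g (⟪Dvec, w⟫ - ε * Real.exp (T - S0)) T := by
      apply hfD.sub
      have hB : HasDerivAt (fun u : ℝ => M + ε * Real.exp (u - S0))
          (ε * Real.exp (T - S0)) T := by
        have := ((((hasDerivAt_id T).sub_const S0).exp).const_mul ε).const_add M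
        simpa using this
      exact hB
    have hgT : g T = 0 := by simp [hg, hfiT]
    have hg' : ⟪Dvec, w⟫ - ε * Real.exp (T - S0) < 0 := by
      have := Real.exp_pos (T - S0)
      nlinarith
    -- slopes from the left are nonneg
    have hslope : ∀ᶠ u in nhdsWithin T (Set.Iio T), 0 ≤ slope g T u := by
      have hev2 : ∀ᶠ u in nhds T, S0 < u := eventually_gt_nhds hS0T
      have hev3 : ∀ᶠ u in nhdsWithin T (Set.Iio T), u ∈ Set.Iio T :=
        eventually_mem_nhdsWithin
      filter_upwards [hev2.filter_mono nhdsWithin_le_nhds, hev3] with u hu2 hu3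
      have huE : u ∉ E := fun hmemE => absurd (csInf_le hEbdd hmemE) (not_le.mpr hu3)
      simp only [hE, Set.mem_setOf_eq, not_and, not_exists, not_le] at huE
      have hgu : g u < 0 := by
        have := huE hu2.le i
        simp only [hg]; linarith
      rw [slope_def_field, hgT, sub_zero]
      simp only [Set.mem_Iio] at hu3
      apply div_nonneg_iff.mpr
      right
      exact ⟨hgu.le, by linarith⟩
    have htends : Filter.Tendsto (slope g T) (nhdsWithin T (Set.Iio T))
        (nhds (⟪Dvec, w⟫ - ε * Real.exp (T - S0))) := by
      have h1 := (hgD.hasDerivWithinAt (s := Set.Iio T))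
      rw [hasDerivWithinAt_iff_tendsto_slope] at h1
      rwa [Set.diff_singleton_eq_self (by simp)] at h1
    have := ge_of_tendsto htends hslope
    linarith
  -- conclude
  intro t ht i
  rcases le_or_gt t S0 with htS0 | htS0
  · exact hmem i t ⟨ht, htS0⟩
  · by_contra hcon
    push_neg at hcon
    have hexp := Real.exp_pos (t - S0)
    set ε : ℝ := (f i t - M) / (2 * Real.exp (t - S0)) with hε
    have hεpos : 0 < ε := div_pos (by linarith) (by linarith)
    have h1 := key ε hεpos t htS0.le i
    have h2 : ε * Real.exp (t - S0) = (f i t - M) / 2 := by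
      rw [hε]; field_simp
    rw [h2] at h1
    linarith

/-- invariance of directional velocity bounds for the distributed-delay
Cucker-Smale system. -/
theorem csd_scalar_product_bounds {d N : ℕ} (S : CSD d N) (hN : 2 ≤ N)
    (w : EuclideanSpace ℝ (Fin d)) (S0 : ℝ) (hS0 : 0 ≤ S0) :
    ∀ t, S0 - S.τbar ≤ t → ∀ i : Fin N,
      sInf {r | ∃ j : Fin N, ∃ s ∈ Set.Icc (S0 - S.τbar) S0, r = ⟪S.v j s, w⟫}
          ≤ ⟪S.v i t, w⟫ ∧
        ⟪S.v i t, w⟫ ≤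
          sSup {r | ∃ j : Fin N, ∃ s ∈ Set.Icc (S0 - S.τbar) S0, r = ⟪S.v j s, w⟫} := by
  intro t ht i
  constructor
  · have hneg := csd_upper S hN (-w) S0 hS0 t ht i
    have hset : {r | ∃ j : Fin N, ∃ s ∈ Set.Icc (S0 - S.τbar) S0, r = ⟪S.v j s, -w⟫}
        = -{r | ∃ j : Fin N, ∃ s ∈ Set.Icc (S0 - S.τbar) S0, r = ⟪S.v j s, w⟫} := by
      ext r
      simp only [Set.mem_neg, Set.mem_setOf_eq, inner_neg_right]
      constructor
      · rintro ⟨j, s, hs, rfl⟩; exact ⟨j, s, hs, by ring⟩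
      · rintro ⟨j, s, hs, hr⟩; exact ⟨j, s, hs, by linarith⟩
    rw [hset, inner_neg_right] at hneg
    rw [Real.sInf_def]
    linarith
  · exact csd_upper S hN w S0 hS0 t ht i
end

section
/- (Exponential flocking for the distributed-delay model.) Under the stated hypotheses, every solution of the distributed-delay Cucker-Smale system satisfies sup_{t ≥ -τ̄} d_X(t) ≤ ρ* for some ρ* > 0, and d_V(t) ≤ (max_{i,j} max_{r,s∈[-τ̄,0]} |v_i(r) - v_j(s)|) e^{-ν(t - 3T)} for all t ≥ 0, for some ν > 0 independent of N. -/
open scoped BigOperators RealInnerProductSpace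

namespace CSDP
open Set MeasureTheory intervalIntegral Finset
variable {d N : ℕ}

lemma xexp_le_one {x : ℝ} (hx : 0 ≤ x) : x * Real.exp (-x) ≤ 1 := by
  have h1 := Real.add_one_le_exp x
  have h2 : Real.exp (-x) * Real.exp x = 1 := by rw [← Real.exp_add]; simp
  nlinarith [Real.exp_pos (-x), Real.exp_pos x]

lemma taubar_pos (S : CSD d N) : 0 < S.τbar := by
  obtain ⟨h1, h2, h3⟩ := S.τ_mem 0 le_rfl
  linarith

lemma psi_le_K (S : CSD d N) (r : ℝ) : S.ψ r ≤ S.K :=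
  le_csSup S.ψ_bdd ⟨r, rfl⟩

lemma K_pos (S : CSD d N) : 0 < S.K := lt_of_lt_of_le (S.ψ_pos 0) (psi_le_K S 0)

lemma Ncast {N : ℕ} (hN : 2 ≤ N) : (1:ℝ) ≤ (N:ℝ) - 1 := by
  have : (2:ℝ) ≤ (N:ℝ) := by exact_mod_cast hN
  linarith

lemma tau_sub_mem (S : CSD d N) {t : ℝ} (ht : 0 ≤ t) {s : ℝ}
    (hs : s ∈ Icc (t - S.τ2 t) (t - S.τ1 t)) : t - s ∈ Icc (0:ℝ) S.τbar := by
  obtain ⟨h1, h2, h3⟩ := S.τ_mem t ht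
  obtain ⟨hs1, hs2⟩ := hs
  constructor <;> [linarith; linarith]

lemma tau_le (S : CSD d N) {t : ℝ} (ht : 0 ≤ t) :
    t - S.τ2 t ≤ t - S.τ1 t := by
  obtain ⟨h1, h2, h3⟩ := S.τ_mem t ht
  linarith

lemma hist_sub (S : CSD d N) {t : ℝ} (ht : 0 ≤ t) :
    Icc (t - S.τ2 t) (t - S.τ1 t) ⊆ Icc (t - S.τbar) t := by
  obtain ⟨h1, h2, h3⟩ := S.τ_mem t ht
  intro s hs
  obtain ⟨hs1, hs2⟩ := hs
  constructor <;> [linarith; linarith]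

lemma h_pos (S : CSD d N) {t : ℝ} (ht : 0 ≤ t) : 0 < S.h t := by
  obtain ⟨h1, h2, h3⟩ := S.τ_mem t ht
  refine intervalIntegral_pos_of_pos_on (S.β_cont.intervalIntegrable _ _) ?_ h2
  intro x hx
  exact S.β_pos x ⟨by linarith [hx.1], by linarith [hx.2]⟩

lemma alpha_mem (S : CSD d N) {t : ℝ} (ht : 0 ≤ t) : S.α t ∈ Icc (0:ℝ) 1 := S.α_mem t ht

/-- the scalar observable -/
noncomputable def fi (S : CSD d N) (p : EuclideanSpace ℝ (Fin d)) (i : Fin N) (t : ℝ) : ℝ :=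
  ⟪p, S.v i t⟫

lemma fi_cont (S : CSD d N) (p : EuclideanSpace ℝ (Fin d)) (i : Fin N) :
    Continuous (fi S p i) := continuous_const.inner (S.v_cont i)

lemma fi_neg (S : CSD d N) (p : EuclideanSpace ℝ (Fin d)) (i : Fin N) (t : ℝ) :
    fi S (-p) i t = - fi S p i t := by
  simp [fi, inner_neg_left]

lemma fi_le_norm (S : CSD d N) (p : EuclideanSpace ℝ (Fin d)) (i : Fin N) (t : ℝ) :
    fi S p i t ≤ ‖p‖ * ‖S.v i t‖ := real_inner_le_norm p (S.v i t)

/-- the integrand is interval integrable -/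
lemma integrand_ii (S : CSD d N) (i j : Fin N) (t a b : ℝ) :
    IntervalIntegrable
      (fun s => (S.β (t - s) * (S.ψ ‖S.x i t - S.x j s‖ / ((N : ℝ) - 1))) • (S.v j s - S.v i t))
      MeasureTheory.volume a b := by
  apply Continuous.intervalIntegrable
  apply Continuous.smul (f := fun s => S.β (t - s) * (S.ψ ‖S.x i t - S.x j s‖ / ((N : ℝ) - 1)))
    (g := fun s => S.v j s - S.v i t)
  · exact (S.β_cont.comp (continuous_const.sub continuous_id)).mul
      ((S.ψ_cont.comp ((continuous_const.sub (S.x_cont j)).norm)).div_const _)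
  · exact (S.v_cont j).sub continuous_const

/-- derivative of the scalar observable -/
lemma hasDerivAt_fi (S : CSD d N) (p : EuclideanSpace ℝ (Fin d)) (i : Fin N) {t : ℝ} (ht : 0 < t) :
    HasDerivAt (fi S p i)
      ((S.h t)⁻¹ * ∑ j ∈ Finset.univ.erase i, S.α t *
        ∫ s in (t - S.τ2 t)..(t - S.τ1 t),
          (S.β (t - s) * (S.ψ ‖S.x i t - S.x j s‖ / ((N : ℝ) - 1))) * (fi S p j s - fi S p i t)) t := by
  have hv := S.v_deriv i t ht
  have h1 : HasDerivAt (fi S p i) (⟪p, ((∫ s in S.τ1 t..S.τ2 t, S.β s)⁻¹ •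
      ∑ j ∈ Finset.univ.erase i,
        S.α t • ∫ s in (t - S.τ2 t)..(t - S.τ1 t),
          (S.β (t - s) * (S.ψ ‖S.x i t - S.x j s‖ / ((N : ℝ) - 1))) • (S.v j s - S.v i t))⟫) t := by
    exact (innerSL ℝ p).hasFDerivAt.comp_hasDerivAt t hv
  convert h1 using 1
  rw [real_inner_smul_right, inner_sum]
  show (S.h t)⁻¹ * _ = (S.h t)⁻¹ * _
  congr 1
  refine Finset.sum_congr rfl (fun j _ => ?_)
  rw [real_inner_smul_right]
  congr 1
  calc (∫ s in (t - S.τ2 t)..(t - S.τ1 t),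
      (S.β (t - s) * (S.ψ ‖S.x i t - S.x j s‖ / ((N : ℝ) - 1))) * (fi S p j s - fi S p i t))
      = ∫ s in (t - S.τ2 t)..(t - S.τ1 t),
        (innerSL ℝ p) ((S.β (t - s) * (S.ψ ‖S.x i t - S.x j s‖ / ((N : ℝ) - 1))) • (S.v j s - S.v i t)) := by
        refine intervalIntegral.integral_congr (fun s _ => ?_)
        simp only [innerSL_apply_apply, real_inner_smul_right, inner_sub_right, fi]
    _ = (innerSL ℝ p) (∫ s in (t - S.τ2 t)..(t - S.τ1 t),
        (S.β (t - s) * (S.ψ ‖S.x i t - S.x j s‖ / ((N : ℝ) - 1))) • (S.v j s - S.v i t)) :=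
        ContinuousLinearMap.intervalIntegral_comp_comm _ (integrand_ii S i j t _ _)
    _ = _ := by rw [innerSL_apply_apply]


/-- The fundamental differential inequality, with optional "gain" from a low agent `j0`. -/
lemma deriv_bound (S : CSD d N) (hN : 2 ≤ N) (p : EuclideanSpace ℝ (Fin d)) {t : ℝ} (ht : 0 < t)
    (i j0 : Fin N) (hij : j0 ≠ i) {B ε0 η : ℝ} (hε0 : 0 ≤ ε0) (hη : 0 ≤ η)
    (hhist : ∀ j, ∀ s ∈ Icc (t - S.τ2 t) (t - S.τ1 t), fi S p j s ≤ B)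
    (hself : fi S p i t ≤ B)
    (hlow : ∀ s ∈ Icc (t - S.τ2 t) (t - S.τ1 t), fi S p j0 s ≤ B - ε0)
    (hψlow : ∀ s ∈ Icc (t - S.τ2 t) (t - S.τ1 t), η ≤ S.ψ ‖S.x i t - S.x j0 s‖) :
    (S.h t)⁻¹ * ∑ j ∈ Finset.univ.erase i, S.α t *
        ∫ s in (t - S.τ2 t)..(t - S.τ1 t),
          (S.β (t - s) * (S.ψ ‖S.x i t - S.x j s‖ / ((N : ℝ) - 1))) * (fi S p j s - fi S p i t)
      ≤ S.K * (B - fi S p i t) - S.α t * (η / ((N : ℝ) - 1)) * ε0 := by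
  have ht0 : 0 ≤ t := le_of_lt ht
  have hNR := Ncast hN
  have hNpos : 0 < (N:ℝ) - 1 := lt_of_lt_of_le one_pos hNR
  have hKpos := K_pos S
  have hhpos := h_pos S ht0
  have hα := alpha_mem S ht0
  have hBfi : 0 ≤ B - fi S p i t := by linarith
  have hab : t - S.τ2 t ≤ t - S.τ1 t := tau_le S ht0
  have hβint : (∫ s in (t - S.τ2 t)..(t - S.τ1 t), S.β (t - s)) = S.h t := by
    rw [intervalIntegral.integral_comp_sub_left (fun u => S.β u) t, sub_sub_cancel, sub_sub_cancel]
    rfl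
  have hβcont : Continuous (fun s => S.β (t - s)) :=
    S.β_cont.comp (continuous_const.sub continuous_id)
  have hIcont : ∀ j : Fin N, Continuous (fun s =>
      (S.β (t - s) * (S.ψ ‖S.x i t - S.x j s‖ / ((N : ℝ) - 1))) * (fi S p j s - fi S p i t)) := by
    intro j
    exact ((hβcont.mul ((S.ψ_cont.comp ((continuous_const.sub (S.x_cont j)).norm)).div_const _)).mul
      ((fi_cont S p j).sub continuous_const))
  set C1 : ℝ := S.K / ((N:ℝ)-1) * (B - fi S p i t) with hC1
  set E : ℝ := η / ((N:ℝ)-1) * ε0 with hE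
  have hC1nn : 0 ≤ C1 := mul_nonneg (div_nonneg hKpos.le hNpos.le) hBfi
  set I : Fin N → ℝ := fun j => ∫ s in (t - S.τ2 t)..(t - S.τ1 t),
      (S.β (t - s) * (S.ψ ‖S.x i t - S.x j s‖ / ((N : ℝ) - 1))) * (fi S p j s - fi S p i t) with hI
  -- generic bound
  have key : ∀ j : Fin N, I j ≤ C1 * S.h t := by
    intro j
    have hmono : I j ≤ ∫ s in (t - S.τ2 t)..(t - S.τ1 t), S.β (t - s) * C1 := by
      refine intervalIntegral.integral_mono_on hab ((hIcont j).intervalIntegrable _ _)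
        ((hβcont.mul continuous_const).intervalIntegrable _ _) ?_
      intro s hs
      have hβp : 0 < S.β (t - s) := S.β_pos _ (tau_sub_mem S ht0 hs)
      have hψp := S.ψ_pos ‖S.x i t - S.x j s‖
      have hψK := psi_le_K S ‖S.x i t - S.x j s‖
      have hfj := hhist j s hs
      have h2 : 0 ≤ S.ψ ‖S.x i t - S.x j s‖ / ((N:ℝ)-1) := (div_pos hψp hNpos).le
      have inner1 : S.ψ ‖S.x i t - S.x j s‖ / ((N:ℝ)-1) * (fi S p j s - fi S p i t) ≤ C1 := by
        calc S.ψ ‖S.x i t - S.x j s‖ / ((N:ℝ)-1) * (fi S p j s - fi S p i t)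
            ≤ S.ψ ‖S.x i t - S.x j s‖ / ((N:ℝ)-1) * (B - fi S p i t) := by
              exact mul_le_mul_of_nonneg_left (by linarith) h2
          _ ≤ S.K / ((N:ℝ)-1) * (B - fi S p i t) := by
              refine mul_le_mul_of_nonneg_right ?_ hBfi
              gcongr
      calc (S.β (t - s) * (S.ψ ‖S.x i t - S.x j s‖ / ((N : ℝ) - 1))) * (fi S p j s - fi S p i t)
          = S.β (t - s) * (S.ψ ‖S.x i t - S.x j s‖ / ((N : ℝ) - 1) * (fi S p j s - fi S p i t)) := by
            ring
        _ ≤ S.β (t - s) * C1 := mul_le_mul_of_nonneg_left inner1 hβp.le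
    calc I j ≤ ∫ s in (t - S.τ2 t)..(t - S.τ1 t), S.β (t - s) * C1 := hmono
      _ = (∫ s in (t - S.τ2 t)..(t - S.τ1 t), S.β (t - s)) * C1 :=
          intervalIntegral.integral_mul_const _ _
      _ = C1 * S.h t := by rw [hβint]; ring
  -- improved bound for j0
  have keyj0 : I j0 ≤ C1 * S.h t - E * S.h t := by
    have hmono : I j0 ≤ ∫ s in (t - S.τ2 t)..(t - S.τ1 t), S.β (t - s) * (C1 - E) := by
      refine intervalIntegral.integral_mono_on hab ((hIcont j0).intervalIntegrable _ _)
        ((hβcont.mul continuous_const).intervalIntegrable _ _) ?_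
      intro s hs
      have hβp : 0 < S.β (t - s) := S.β_pos _ (tau_sub_mem S ht0 hs)
      have hψp := S.ψ_pos ‖S.x i t - S.x j0 s‖
      have hψK := psi_le_K S ‖S.x i t - S.x j0 s‖
      have hfj := hlow s hs
      have hψl := hψlow s hs
      have h2 : 0 ≤ S.ψ ‖S.x i t - S.x j0 s‖ / ((N:ℝ)-1) := (div_pos hψp hNpos).le
      have hc_low : η / ((N:ℝ)-1) ≤ S.ψ ‖S.x i t - S.x j0 s‖ / ((N:ℝ)-1) := by gcongr
      have hup : S.ψ ‖S.x i t - S.x j0 s‖ / ((N:ℝ)-1) * (B - fi S p i t)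
          ≤ S.K / ((N:ℝ)-1) * (B - fi S p i t) := by
        refine mul_le_mul_of_nonneg_right ?_ hBfi
        gcongr
      have hdn : E ≤ S.ψ ‖S.x i t - S.x j0 s‖ / ((N:ℝ)-1) * (B - fi S p j0 s) := by
        refine mul_le_mul hc_low (by linarith) hε0 h2
      have inner1 : S.ψ ‖S.x i t - S.x j0 s‖ / ((N:ℝ)-1) * (fi S p j0 s - fi S p i t) ≤ C1 - E := by
        have hid : S.ψ ‖S.x i t - S.x j0 s‖ / ((N:ℝ)-1) * (fi S p j0 s - fi S p i t)
            = S.ψ ‖S.x i t - S.x j0 s‖ / ((N:ℝ)-1) * (B - fi S p i t)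
              - S.ψ ‖S.x i t - S.x j0 s‖ / ((N:ℝ)-1) * (B - fi S p j0 s) := by ring
        rw [hid, hC1]
        linarith
      calc (S.β (t - s) * (S.ψ ‖S.x i t - S.x j0 s‖ / ((N : ℝ) - 1))) * (fi S p j0 s - fi S p i t)
          = S.β (t - s) * (S.ψ ‖S.x i t - S.x j0 s‖ / ((N : ℝ) - 1) * (fi S p j0 s - fi S p i t)) := by
            ring
        _ ≤ S.β (t - s) * (C1 - E) := mul_le_mul_of_nonneg_left inner1 hβp.le
    calc I j0 ≤ ∫ s in (t - S.τ2 t)..(t - S.τ1 t), S.β (t - s) * (C1 - E) := hmono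
      _ = (∫ s in (t - S.τ2 t)..(t - S.τ1 t), S.β (t - s)) * (C1 - E) :=
          intervalIntegral.integral_mul_const _ _
      _ = C1 * S.h t - E * S.h t := by rw [hβint]; ring
  -- sum the bounds
  have hmem : j0 ∈ Finset.univ.erase i := Finset.mem_erase.mpr ⟨hij, Finset.mem_univ _⟩
  have hsum : ∑ j ∈ Finset.univ.erase i, I j ≤ ((N:ℝ) - 1) * (C1 * S.h t) - E * S.h t := by
    have hb : ∀ j ∈ Finset.univ.erase i, I j
        ≤ C1 * S.h t + (if j = j0 then -(E * S.h t) else 0) := by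
      intro j _
      by_cases hj : j = j0
      · subst hj
        rw [if_pos rfl]
        linarith [keyj0]
      · simp only [if_neg hj]
        linarith [key j]
    calc ∑ j ∈ Finset.univ.erase i, I j
        ≤ ∑ j ∈ Finset.univ.erase i, (C1 * S.h t + (if j = j0 then -(E * S.h t) else 0)) :=
          Finset.sum_le_sum hb
      _ = ((N:ℝ) - 1) * (C1 * S.h t) - E * S.h t := by
          rw [Finset.sum_add_distrib, Finset.sum_const, Finset.sum_ite_eq' _ j0 (fun _ => -(E * S.h t))]
          simp only [hmem, if_pos]
          rw [Finset.card_erase_of_mem (Finset.mem_univ i), Finset.card_univ, Fintype.card_fin]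
          have h2N : 1 ≤ N := le_trans one_le_two hN
          have : ((N - 1 : ℕ) : ℝ) = (N:ℝ) - 1 := by
            push_cast [h2N]
            ring
          rw [nsmul_eq_mul, this]
          ring
  -- put everything together
  have hLHS : (S.h t)⁻¹ * ∑ j ∈ Finset.univ.erase i, S.α t * I j
      = (S.h t)⁻¹ * (S.α t * ∑ j ∈ Finset.univ.erase i, I j) := by
    simp only [Finset.mul_sum]
  rw [hLHS]
  have hstep : S.α t * ∑ j ∈ Finset.univ.erase i, I j
      ≤ S.α t * (((N:ℝ) - 1) * (C1 * S.h t) - E * S.h t) :=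
    mul_le_mul_of_nonneg_left hsum hα.1
  have hne : S.h t ≠ 0 := ne_of_gt hhpos
  have hfin : (S.h t)⁻¹ * (S.α t * (((N:ℝ) - 1) * (C1 * S.h t) - E * S.h t))
      = S.α t * (((N:ℝ) - 1) * C1) - S.α t * E := by
    field_simp
  have hC1K : ((N:ℝ) - 1) * C1 = S.K * (B - fi S p i t) := by
    rw [hC1]
    field_simp
  have hαK : S.α t * (((N:ℝ) - 1) * C1) ≤ S.K * (B - fi S p i t) := by
    rw [hC1K]
    nlinarith [mul_nonneg hKpos.le hBfi, hα.1, hα.2]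
  calc (S.h t)⁻¹ * (S.α t * ∑ j ∈ Finset.univ.erase i, I j)
      ≤ (S.h t)⁻¹ * (S.α t * (((N:ℝ) - 1) * (C1 * S.h t) - E * S.h t)) :=
        mul_le_mul_of_nonneg_left hstep (inv_nonneg.mpr hhpos.le)
    _ = S.α t * (((N:ℝ) - 1) * C1) - S.α t * E := hfin
    _ ≤ S.K * (B - fi S p i t) - S.α t * (η / ((N : ℝ) - 1)) * ε0 := by
        rw [hE]
        nlinarith [hαK]


lemma exists_other {N : ℕ} (hN : 2 ≤ N) (i : Fin N) : ∃ j, j ≠ i := by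
  have : Nontrivial (Fin N) := Fin.nontrivial_iff_two_le.mpr hN
  exact exists_ne i

/-- derivative bound without gain -/
lemma deriv_bound' (S : CSD d N) (hN : 2 ≤ N) (p : EuclideanSpace ℝ (Fin d)) {t : ℝ} (ht : 0 < t)
    (i : Fin N) {B : ℝ}
    (hhist : ∀ j, ∀ s ∈ Icc (t - S.τ2 t) (t - S.τ1 t), fi S p j s ≤ B)
    (hself : fi S p i t ≤ B) :
    (S.h t)⁻¹ * ∑ j ∈ Finset.univ.erase i, S.α t *
        ∫ s in (t - S.τ2 t)..(t - S.τ1 t),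
          (S.β (t - s) * (S.ψ ‖S.x i t - S.x j s‖ / ((N : ℝ) - 1))) * (fi S p j s - fi S p i t)
      ≤ S.K * (B - fi S p i t) := by
  obtain ⟨j0, hj0⟩ := exists_other hN i
  have := deriv_bound S hN p ht i j0 hj0 (le_refl (0:ℝ)) (le_refl (0:ℝ)) hhist hself
    (fun s hs => by simpa using hhist j0 s hs) (fun s hs => (S.ψ_pos _).le)
  simpa using this

/-- the exponential-weighted gap is monotone -/
lemma mono_exp (S : CSD d N) (hN : 2 ≤ N) (p : EuclideanSpace ℝ (Fin d)) (i : Fin N)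
    {a b B : ℝ} (ha : 0 ≤ a)
    (hhist : ∀ t ∈ Ioo a b, ∀ j, ∀ s ∈ Icc (t - S.τ2 t) (t - S.τ1 t), fi S p j s ≤ B)
    (hself : ∀ t ∈ Icc a b, fi S p i t ≤ B) :
    MonotoneOn (fun t => Real.exp (S.K * t) * (B - fi S p i t)) (Icc a b) := by
  apply monotoneOn_of_deriv_nonneg (convex_Icc a b)
  · exact ((Real.continuous_exp.comp (continuous_const.mul continuous_id)).mul
      (continuous_const.sub (fi_cont S p i))).continuousOn
  · rw [interior_Icc]
    intro t ht
    have htpos : 0 < t := lt_of_le_of_lt ha ht.1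
    have hexp : HasDerivAt (fun u => Real.exp (S.K * u)) (Real.exp (S.K * t) * S.K) t := by
      simpa using ((hasDerivAt_id t).const_mul S.K).exp
    exact (hexp.mul ((hasDerivAt_fi S p i htpos).const_sub B)).differentiableAt.differentiableWithinAt
  · rw [interior_Icc]
    intro t ht
    have htpos : 0 < t := lt_of_le_of_lt ha ht.1
    have hexp : HasDerivAt (fun u => Real.exp (S.K * u)) (Real.exp (S.K * t) * S.K) t := by
      simpa using ((hasDerivAt_id t).const_mul S.K).exp
    have hfd := hasDerivAt_fi S p i htpos
    have hg := hexp.mul (hfd.const_sub B)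
    rw [HasDerivAt.deriv (f := fun t => Real.exp (S.K * t) * (B - fi S p i t)) hg]
    have hDb := deriv_bound' S hN p htpos i (hhist t ht) (hself t ⟨ht.1.le, ht.2.le⟩)
    have hexppos := Real.exp_pos (S.K * t)
    nlinarith [hDb, hexppos]

/-- invariance: values stay below any bound dominating the history window -/
lemma invariance (S : CSD d N) (hN : 2 ≤ N) (p : EuclideanSpace ℝ (Fin d)) {t0 B : ℝ}
    (ht0 : 0 ≤ t0)
    (hinit : ∀ j, ∀ s ∈ Icc (t0 - S.τbar) t0, fi S p j s ≤ B) :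
    ∀ i, ∀ t, t0 ≤ t → fi S p i t ≤ B := by
  suffices H : ∀ ε > (0:ℝ), ∀ i, ∀ t, t0 ≤ t → fi S p i t ≤ B + ε by
    intro i t ht
    by_contra hcon
    push_neg at hcon
    have := H ((fi S p i t - B)/2) (by linarith) i t ht
    linarith
  intro ε hε
  by_contra hcon
  push_neg at hcon
  obtain ⟨i1, t1, ht1, hgt⟩ := hcon
  set A := {t : ℝ | t0 ≤ t ∧ ∃ i, B + ε < fi S p i t} with hA
  have hAne : A.Nonempty := ⟨t1, ht1, i1, hgt⟩
  have hAbd : BddBelow A := ⟨t0, fun t ht => ht.1⟩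
  set c := sInf A with hc
  have hct0 : t0 ≤ c := le_csInf hAne (fun t ht => ht.1)
  have hinit' : ∀ j, fi S p j t0 ≤ B := fun j =>
    hinit j t0 ⟨by linarith [S.τbar_nonneg], le_rfl⟩
  have hev : ∀ᶠ s in nhds t0, ∀ i, fi S p i s < B + ε := by
    rw [Filter.eventually_all]
    intro i
    exact Filter.Tendsto.eventually_lt_const (by linarith [hinit' i]) ((fi_cont S p i).tendsto t0)
  obtain ⟨δ, hδ, hball⟩ := Metric.eventually_nhds_iff.mp hev
  have hcgt : t0 < c := by
    have : t0 + δ/2 ≤ c := by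
      apply le_csInf hAne
      intro t ht
      by_contra hlt
      push_neg at hlt
      have hd : dist t t0 < δ := by
        rw [Real.dist_eq, abs_lt]
        constructor <;> [linarith [ht.1]; linarith]
      obtain ⟨i, hi⟩ := ht.2
      exact absurd hi (not_lt.mpr (hball hd i).le)
    linarith
  have hle : ∀ s, t0 ≤ s → s < c → ∀ i, fi S p i s ≤ B + ε := by
    intro s hs1 hs2 i
    by_contra h
    push_neg at h
    exact absurd (csInf_le hAbd ⟨hs1, i, h⟩) (not_le.mpr hs2)
  have hlec : ∀ i, fi S p i c ≤ B + ε := by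
    intro i
    have htc : Filter.Tendsto (fi S p i) (nhdsWithin c (Iio c)) (nhds (fi S p i c)) :=
      ((fi_cont S p i).tendsto c).mono_left nhdsWithin_le_nhds
    refine le_of_tendsto htc ?_
    filter_upwards [Ioo_mem_nhdsLT hcgt] with s hs
    exact hle s hs.1.le hs.2 i
  have hex : ∃ i, fi S p i c = B + ε := by
    by_contra h
    push_neg at h
    have hlt : ∀ i, fi S p i c < B + ε := fun i => lt_of_le_of_ne (hlec i) (h i)
    have hev2 : ∀ᶠ s in nhds c, ∀ i, fi S p i s < B + ε := by
      rw [Filter.eventually_all]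
      intro i
      exact Filter.Tendsto.eventually_lt_const (hlt i) ((fi_cont S p i).tendsto c)
    obtain ⟨δ2, hδ2, hb2⟩ := Metric.eventually_nhds_iff.mp hev2
    obtain ⟨aa, haA, haδ⟩ := (csInf_lt_iff hAbd hAne).mp (show sInf A < c + δ2 by rw [← hc]; linarith)
    have hac : c ≤ aa := csInf_le hAbd haA
    have hdist : dist aa c < δ2 := by
      rw [Real.dist_eq, abs_lt]
      constructor <;> [linarith; linarith]
    obtain ⟨ia, hia⟩ := haA.2
    exact absurd hia (not_lt.mpr (hb2 hdist ia).le)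
  obtain ⟨i2, hi2⟩ := hex
  have hmono : MonotoneOn (fun t => Real.exp (S.K * t) * (B + ε - fi S p i2 t)) (Icc t0 c) := by
    apply mono_exp S hN p i2 ht0
    · intro t ht j s hs
      have hsub := hist_sub S (le_trans ht0 ht.1.le) hs
      rcases le_or_gt s t0 with h1 | h1
      · refine le_trans (hinit j s ⟨?_, h1⟩) (by linarith)
        have : t - S.τbar ≤ s := hsub.1
        linarith [ht.1]
      · exact hle s h1.le (lt_of_le_of_lt hsub.2 ht.2) j
    · intro t ht
      rcases lt_or_eq_of_le ht.2 with h1 | h1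
      · exact hle t ht.1 h1 i2
      · rw [h1]; exact hlec i2
  have h1 := hmono ⟨le_rfl, hct0⟩ ⟨hct0, le_rfl⟩ hct0
  simp only at h1
  rw [hi2] at h1
  have h2 : B + ε - fi S p i2 t0 ≥ ε := by linarith [hinit' i2]
  nlinarith [Real.exp_pos (S.K * t0), Real.exp_pos (S.K * c), h1, h2]


section SupMachinery
variable (S : CSD d N)

/-- max of the observable over the history window ending at `t0` -/
noncomputable def MB (p : EuclideanSpace ℝ (Fin d)) (t0 : ℝ) : ℝ :=
  sSup {r | ∃ j, ∃ s ∈ Icc (t0 - S.τbar) t0, r = fi S p j s}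

/-- max of pairwise velocity differences over the history window ending at `t0` -/
noncomputable def FB (t0 : ℝ) : ℝ :=
  sSup {r | ∃ i j : Fin N, ∃ s ∈ Icc (t0 - S.τbar) t0, ∃ u ∈ Icc (t0 - S.τbar) t0,
    r = ‖S.v i s - S.v j u‖}

lemma finN_pos (hN : 2 ≤ N) : 0 < N := lt_of_lt_of_le two_pos hN

lemma MB_set_eq (p : EuclideanSpace ℝ (Fin d)) (t0 : ℝ) :
    {r | ∃ j, ∃ s ∈ Icc (t0 - S.τbar) t0, r = fi S p j s}
    = ⋃ (j : Fin N), (fun s => fi S p j s) '' Icc (t0 - S.τbar) t0 := by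
  ext r
  simp only [Set.mem_setOf_eq, Set.mem_iUnion, Set.mem_image, eq_comm]

lemma MB_compact (p : EuclideanSpace ℝ (Fin d)) (t0 : ℝ) :
    IsCompact {r | ∃ j, ∃ s ∈ Icc (t0 - S.τbar) t0, r = fi S p j s} := by
  rw [MB_set_eq]
  exact isCompact_iUnion (fun j => isCompact_Icc.image (fi_cont S p j))

lemma MB_bdd (p : EuclideanSpace ℝ (Fin d)) (t0 : ℝ) :
    BddAbove {r | ∃ j, ∃ s ∈ Icc (t0 - S.τbar) t0, r = fi S p j s} :=
  (MB_compact S p t0).bddAbove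

lemma MB_nonempty (hN : 2 ≤ N) (p : EuclideanSpace ℝ (Fin d)) (t0 : ℝ) :
    {r | ∃ j, ∃ s ∈ Icc (t0 - S.τbar) t0, r = fi S p j s}.Nonempty := by
  refine ⟨fi S p ⟨0, finN_pos hN⟩ t0, ⟨0, finN_pos hN⟩, t0, ⟨by linarith [S.τbar_nonneg], le_rfl⟩, rfl⟩

lemma le_MB (p : EuclideanSpace ℝ (Fin d)) {t0 : ℝ} (j : Fin N) {s : ℝ}
    (hs : s ∈ Icc (t0 - S.τbar) t0) : fi S p j s ≤ MB S p t0 :=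
  le_csSup (MB_bdd S p t0) ⟨j, s, hs, rfl⟩

lemma MB_le (hN : 2 ≤ N) (p : EuclideanSpace ℝ (Fin d)) {t0 b : ℝ}
    (hb : ∀ j, ∀ s ∈ Icc (t0 - S.τbar) t0, fi S p j s ≤ b) : MB S p t0 ≤ b := by
  refine csSup_le (MB_nonempty S hN p t0) ?_
  rintro r ⟨j, s, hs, rfl⟩
  exact hb j s hs

/-- all later values are dominated by the window max -/
lemma hist_le_MB (hN : 2 ≤ N) (p : EuclideanSpace ℝ (Fin d)) {t0 : ℝ} (ht0 : 0 ≤ t0) :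
    ∀ j, ∀ s, t0 - S.τbar ≤ s → fi S p j s ≤ MB S p t0 := by
  intro j s hs
  rcases le_or_gt s t0 with h1 | h1
  · exact le_MB S p j ⟨hs, h1⟩
  · exact invariance S hN p ht0 (fun j' s' hs' => le_MB S p j' hs') j s h1.le

lemma FB_set_eq (t0 : ℝ) :
    {r | ∃ i j : Fin N, ∃ s ∈ Icc (t0 - S.τbar) t0, ∃ u ∈ Icc (t0 - S.τbar) t0,
      r = ‖S.v i s - S.v j u‖}
    = ⋃ (ij : Fin N × Fin N), (fun su : ℝ × ℝ => ‖S.v ij.1 su.1 - S.v ij.2 su.2‖) ''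
        (Icc (t0 - S.τbar) t0 ×ˢ Icc (t0 - S.τbar) t0) := by
  ext r
  constructor
  · rintro ⟨i, j, s, hs, u, hu, rfl⟩
    exact Set.mem_iUnion.mpr ⟨(i, j), ⟨(s, u), ⟨hs, hu⟩, rfl⟩⟩
  · rintro hr
    obtain ⟨⟨i, j⟩, ⟨s, u⟩, ⟨hs, hu⟩, rfl⟩ := Set.mem_iUnion.mp hr
    exact ⟨i, j, s, hs, u, hu, rfl⟩

lemma FB_compact (t0 : ℝ) :
    IsCompact {r | ∃ i j : Fin N, ∃ s ∈ Icc (t0 - S.τbar) t0, ∃ u ∈ Icc (t0 - S.τbar) t0,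
      r = ‖S.v i s - S.v j u‖} := by
  rw [FB_set_eq]
  refine isCompact_iUnion (fun ij => (isCompact_Icc.prod isCompact_Icc).image ?_)
  exact (((S.v_cont ij.1).comp continuous_fst).sub ((S.v_cont ij.2).comp continuous_snd)).norm

lemma FB_bdd (t0 : ℝ) :
    BddAbove {r | ∃ i j : Fin N, ∃ s ∈ Icc (t0 - S.τbar) t0, ∃ u ∈ Icc (t0 - S.τbar) t0,
      r = ‖S.v i s - S.v j u‖} := (FB_compact S t0).bddAbove

lemma FB_nonempty (hN : 2 ≤ N) (t0 : ℝ) :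
    {r | ∃ i j : Fin N, ∃ s ∈ Icc (t0 - S.τbar) t0, ∃ u ∈ Icc (t0 - S.τbar) t0,
      r = ‖S.v i s - S.v j u‖}.Nonempty := by
  have hm : t0 ∈ Icc (t0 - S.τbar) t0 := ⟨by linarith [S.τbar_nonneg], le_rfl⟩
  exact ⟨0, ⟨0, finN_pos hN⟩, ⟨0, finN_pos hN⟩, t0, hm, t0, hm, by simp⟩

lemma FB_nonneg (hN : 2 ≤ N) (t0 : ℝ) : 0 ≤ FB S t0 := by
  have hm : t0 ∈ Icc (t0 - S.τbar) t0 := ⟨by linarith [S.τbar_nonneg], le_rfl⟩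
  have := le_csSup (FB_bdd S t0)
    (⟨⟨0, finN_pos hN⟩, ⟨0, finN_pos hN⟩, t0, hm, t0, hm, by simp⟩ :
      (0:ℝ) ∈ {r | ∃ i j : Fin N, ∃ s ∈ Icc (t0 - S.τbar) t0, ∃ u ∈ Icc (t0 - S.τbar) t0,
        r = ‖S.v i s - S.v j u‖})
  exact this

lemma le_FB {t0 : ℝ} (i j : Fin N) {s u : ℝ} (hs : s ∈ Icc (t0 - S.τbar) t0)
    (hu : u ∈ Icc (t0 - S.τbar) t0) : ‖S.v i s - S.v j u‖ ≤ FB S t0 :=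
  le_csSup (FB_bdd S t0) ⟨i, j, s, hs, u, hu, rfl⟩

lemma MB_add_le (hN : 2 ≤ N) {p : EuclideanSpace ℝ (Fin d)} (hp : ‖p‖ = 1) (t0 : ℝ) :
    MB S p t0 + MB S (-p) t0 ≤ FB S t0 := by
  have h1 : MB S p t0 ≤ FB S t0 - MB S (-p) t0 := by
    refine csSup_le (MB_nonempty S hN p t0) ?_
    rintro r ⟨j1, s1, hs1, rfl⟩
    have h2 : MB S (-p) t0 ≤ FB S t0 - fi S p j1 s1 := by
      refine csSup_le (MB_nonempty S hN (-p) t0) ?_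
      rintro r ⟨j2, s2, hs2, rfl⟩
      have hin : fi S p j1 s1 + fi S (-p) j2 s2 = ⟪p, S.v j1 s1 - S.v j2 s2⟫ := by
        simp [fi, inner_neg_left, inner_sub_right]
        ring
      have hle : ⟪p, S.v j1 s1 - S.v j2 s2⟫ ≤ ‖S.v j1 s1 - S.v j2 s2‖ := by
        have := real_inner_le_norm p (S.v j1 s1 - S.v j2 s2)
        rwa [hp, one_mul] at this
      have := le_FB S j1 j2 hs1 hs2
      linarith
    linarith
  linarith

/-- the fundamental pair bound after time `t0 - τbar` -/
lemma pair_le_FB (hN : 2 ≤ N) {t0 : ℝ} (ht0 : 0 ≤ t0) (i j : Fin N) {s u : ℝ}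
    (hs : t0 - S.τbar ≤ s) (hu : t0 - S.τbar ≤ u) : ‖S.v i s - S.v j u‖ ≤ FB S t0 := by
  rcases eq_or_ne (S.v i s - S.v j u) 0 with h0 | h0
  · rw [h0, norm_zero]
    exact FB_nonneg S hN t0
  · set w := S.v i s - S.v j u with hw
    set p := ‖w‖⁻¹ • w with hpdef
    have hp : ‖p‖ = 1 := norm_smul_inv_norm h0
    have hnw : ‖w‖ = ⟪p, w⟫ := by
      rw [hpdef, real_inner_smul_left, real_inner_self_eq_norm_mul_norm]
      field_simp
    have hsplit : ⟪p, w⟫ = fi S p i s + fi S (-p) j u := by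
      rw [hw]
      simp [fi, inner_neg_left, inner_sub_right]
      ring
    have h1 : fi S p i s ≤ MB S p t0 := hist_le_MB S hN p ht0 i s hs
    have h2 : fi S (-p) j u ≤ MB S (-p) t0 := hist_le_MB S hN (-p) ht0 j u hu
    have h3 := MB_add_le S hN hp t0
    rw [hw] at hnw hsplit ⊢
    linarith [hnw, hsplit, h1, h2, h3]

lemma FB_antitone (hN : 2 ≤ N) {t0 t1 : ℝ} (h0 : 0 ≤ t0) (h : t0 ≤ t1) :
    FB S t1 ≤ FB S t0 := by
  refine csSup_le (FB_nonempty S hN t1) ?_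
  rintro r ⟨i, j, s, hs, u, hu, rfl⟩
  exact pair_le_FB S hN h0 i j (by linarith [hs.1]) (by linarith [hu.1])

lemma dV_le_FB (hN : 2 ≤ N) {t0 t : ℝ} (ht0 : 0 ≤ t0) (ht : t0 - S.τbar ≤ t) :
    S.dV t ≤ FB S t0 := by
  refine csSup_le ⟨‖S.v ⟨0, finN_pos hN⟩ t - S.v ⟨0, finN_pos hN⟩ t‖, ⟨0, finN_pos hN⟩,
    ⟨0, finN_pos hN⟩, rfl⟩ ?_
  rintro r ⟨i, j, rfl⟩
  exact pair_le_FB S hN ht0 i j ht ht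

end SupMachinery


section Speed
variable (S : CSD d N)

lemma R0V_bdd : BddAbove {r | ∃ j : Fin N, ∃ s ∈ Set.Icc (-S.τbar) 0, r = ‖S.v j s‖} := by
  have : {r | ∃ j : Fin N, ∃ s ∈ Set.Icc (-S.τbar) 0, r = ‖S.v j s‖}
      = ⋃ (j : Fin N), (fun s => ‖S.v j s‖) '' Icc (-S.τbar) 0 := by
    ext r
    simp only [Set.mem_setOf_eq, Set.mem_iUnion, Set.mem_image, eq_comm]
  rw [this]
  exact (isCompact_iUnion (fun j => isCompact_Icc.image (S.v_cont j).norm)).bddAbove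

lemma le_R0V (j : Fin N) {s : ℝ} (hs : s ∈ Icc (-S.τbar) 0) : ‖S.v j s‖ ≤ S.R0V :=
  le_csSup (R0V_bdd S) ⟨j, s, hs, rfl⟩

lemma R0V_nonneg (hN : 2 ≤ N) : 0 ≤ S.R0V :=
  le_trans (norm_nonneg _) (le_R0V S ⟨0, finN_pos hN⟩ ⟨by linarith [S.τbar_nonneg], le_rfl⟩)

/-- uniform speed bound -/
lemma speed_le (hN : 2 ≤ N) (i : Fin N) {t : ℝ} (ht : -S.τbar ≤ t) : ‖S.v i t‖ ≤ S.R0V := by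
  rcases le_or_gt t 0 with h1 | h1
  · exact le_R0V S i ⟨ht, h1⟩
  · rcases eq_or_ne (S.v i t) 0 with h0 | h0
    · rw [h0, norm_zero]
      exact R0V_nonneg S hN
    · set p := ‖S.v i t‖⁻¹ • S.v i t with hpdef
      have hp : ‖p‖ = 1 := norm_smul_inv_norm h0
      have hval : fi S p i t = ‖S.v i t‖ := by
        rw [fi, hpdef, real_inner_smul_left, real_inner_self_eq_norm_mul_norm]
        field_simp
      have hinv := invariance S hN p le_rfl (t0 := 0) (B := S.R0V) ?_ i t h1.le
      · rw [hval] at hinv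
        exact hinv
      · intro j s hs
        have hs' : s ∈ Icc (-S.τbar) 0 := by
          constructor <;> [linarith [hs.1]; exact hs.2]
        calc fi S p j s ≤ ‖p‖ * ‖S.v j s‖ := fi_le_norm S p j s
          _ = ‖S.v j s‖ := by rw [hp, one_mul]
          _ ≤ S.R0V := le_R0V S j hs'

lemma fi_le_R0V (hN : 2 ≤ N) {p : EuclideanSpace ℝ (Fin d)} (hp : ‖p‖ = 1) (j : Fin N)
    {s : ℝ} (hs : -S.τbar ≤ s) : fi S p j s ≤ S.R0V :=
  le_trans (fi_le_norm S p j s) (by rw [hp, one_mul]; exact speed_le S hN j hs)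

lemma MB_le_R0V (hN : 2 ≤ N) {p : EuclideanSpace ℝ (Fin d)} (hp : ‖p‖ = 1) {t0 : ℝ}
    (ht0 : 0 ≤ t0) : MB S p t0 ≤ S.R0V :=
  MB_le S hN p (fun j s hs => fi_le_R0V S hN hp j (by linarith [hs.1]))

lemma x_FTC (i : Fin N) {a b : ℝ} (ha : 0 ≤ a) (hab : a ≤ b) :
    S.x i b - S.x i a = ∫ s in a..b, S.v i s := by
  refine (intervalIntegral.integral_eq_sub_of_hasDeriv_right_of_le hab
    (S.x_cont i).continuousOn (fun t htt => ?_) ((S.v_cont i).intervalIntegrable a b)).symm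
  exact (S.x_deriv i t (lt_of_le_of_lt ha htt.1)).hasDerivWithinAt

lemma x_inc (hN : 2 ≤ N) (i : Fin N) {a b : ℝ} (ha : 0 ≤ a) (hab : a ≤ b) :
    ‖S.x i b - S.x i a‖ ≤ (b - a) * S.R0V := by
  rw [x_FTC S i ha hab]
  have := intervalIntegral.norm_integral_le_of_norm_le_const (C := S.R0V)
    (f := S.v i) (a := a) (b := b) ?_
  · rw [abs_of_nonneg (by linarith)] at this
    linarith [this]
  · intro s hs
    rw [Set.uIoc_of_le hab] at hs
    exact speed_le S hN i (by linarith [hs.1, S.τbar_nonneg])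

lemma dX_bdd (t : ℝ) : BddAbove {r | ∃ i j : Fin N, r = ‖S.x i t - S.x j t‖} := by
  have : {r | ∃ i j : Fin N, r = ‖S.x i t - S.x j t‖}
      = Set.range (fun ij : Fin N × Fin N => ‖S.x ij.1 t - S.x ij.2 t‖) := by
    ext r
    simp only [Set.mem_setOf_eq, Set.mem_range, Prod.exists, eq_comm]
  rw [this]
  exact (Set.finite_range _).bddAbove

lemma le_dX (i j : Fin N) (t : ℝ) : ‖S.x i t - S.x j t‖ ≤ S.dX t :=
  le_csSup (dX_bdd S t) ⟨i, j, rfl⟩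

lemma dX_nonempty (hN : 2 ≤ N) (t : ℝ) :
    {r | ∃ i j : Fin N, r = ‖S.x i t - S.x j t‖}.Nonempty :=
  ⟨_, ⟨0, finN_pos hN⟩, ⟨0, finN_pos hN⟩, rfl⟩

lemma dX_nonneg (hN : 2 ≤ N) (t : ℝ) : 0 ≤ S.dX t :=
  le_trans (norm_nonneg _) (le_dX S ⟨0, finN_pos hN⟩ ⟨0, finN_pos hN⟩ t)

lemma dX_le (hN : 2 ≤ N) {t b : ℝ} (hb : ∀ i j : Fin N, ‖S.x i t - S.x j t‖ ≤ b) :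
    S.dX t ≤ b := by
  refine csSup_le (dX_nonempty S hN t) ?_
  rintro r ⟨i, j, rfl⟩
  exact hb i j

lemma dX_growth (hN : 2 ≤ N) {t0 a b : ℝ} (ht0 : 0 ≤ t0) (ha : 0 ≤ a)
    (hta : t0 - S.τbar ≤ a) (hab : a ≤ b) :
    S.dX b ≤ S.dX a + (b - a) * FB S t0 := by
  refine dX_le S hN (fun i j => ?_)
  have hfi := x_FTC S i ha hab
  have hfj := x_FTC S j ha hab
  have hsub : S.x i b - S.x j b = (S.x i a - S.x j a) + ∫ s in a..b, (S.v i s - S.v j s) := by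
    rw [intervalIntegral.integral_sub ((S.v_cont i).intervalIntegrable a b)
      ((S.v_cont j).intervalIntegrable a b), ← hfi, ← hfj]
    abel
  rw [hsub]
  refine le_trans (norm_add_le _ _) ?_
  have h1 := le_dX S i j a
  have h2 : ‖∫ s in a..b, (S.v i s - S.v j s)‖ ≤ FB S t0 * |b - a| := by
    refine intervalIntegral.norm_integral_le_of_norm_le_const (fun s hs => ?_)
    rw [Set.uIoc_of_le hab] at hs
    exact pair_le_FB S hN ht0 i j (by linarith [hs.1]) (by linarith [hs.1])
  rw [abs_of_nonneg (by linarith)] at h2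
  linarith

end Speed


section Helpers
variable (S : CSD d N)

/-- the scalar derivative expression -/
noncomputable def Dfi (p : EuclideanSpace ℝ (Fin d)) (i : Fin N) (t : ℝ) : ℝ :=
  (S.h t)⁻¹ * ∑ j ∈ Finset.univ.erase i, S.α t *
    ∫ s in (t - S.τ2 t)..(t - S.τ1 t),
      (S.β (t - s) * (S.ψ ‖S.x i t - S.x j s‖ / ((N : ℝ) - 1))) * (fi S p j s - fi S p i t)

lemma hasDerivAt_fi' (p : EuclideanSpace ℝ (Fin d)) (i : Fin N) {t : ℝ} (ht : 0 < t) :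
    HasDerivAt (fi S p i) (Dfi S p i t) t := hasDerivAt_fi S p i ht

lemma Dfi_neg (p : EuclideanSpace ℝ (Fin d)) (i : Fin N) {t : ℝ} (ht : 0 < t) :
    Dfi S (-p) i t = - Dfi S p i t := by
  have h1 := hasDerivAt_fi' S (-p) i ht
  have h2 : HasDerivAt (fi S (-p) i) (- Dfi S p i t) t := by
    have : fi S (-p) i = fun u => - fi S p i u := funext (fun u => fi_neg S p i u)
    rw [this]
    exact (hasDerivAt_fi' S p i ht).neg
  exact h1.unique h2

lemma Dfi_bound' (hN : 2 ≤ N) (p : EuclideanSpace ℝ (Fin d)) (i : Fin N) {t B : ℝ} (ht : 0 < t)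
    (hhist : ∀ j, ∀ s ∈ Icc (t - S.τ2 t) (t - S.τ1 t), fi S p j s ≤ B)
    (hself : fi S p i t ≤ B) : Dfi S p i t ≤ S.K * (B - fi S p i t) :=
  deriv_bound' S hN p ht i hhist hself

/-- crude magnitude bound for the derivative -/
lemma Dfi_abs (hN : 2 ≤ N) {p : EuclideanSpace ℝ (Fin d)} (hp : ‖p‖ = 1) (i : Fin N)
    {t : ℝ} (ht : 0 < t) : |Dfi S p i t| ≤ 2 * S.K * S.R0V := by
  have hhp : ∀ (q : EuclideanSpace ℝ (Fin d)), ‖q‖ = 1 →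
      ∀ j, ∀ s ∈ Icc (t - S.τ2 t) (t - S.τ1 t), fi S q j s ≤ S.R0V := by
    intro q hq j s hs
    have := (hist_sub S ht.le hs).1
    exact fi_le_R0V S hN hq j (by linarith [S.τbar_nonneg])
  have hself : ∀ (q : EuclideanSpace ℝ (Fin d)), ‖q‖ = 1 → fi S q i t ≤ S.R0V := by
    intro q hq
    exact fi_le_R0V S hN hq i (by linarith [S.τbar_nonneg])
  have hnp : ‖-p‖ = 1 := by rw [norm_neg]; exact hp
  have h1 : Dfi S p i t ≤ S.K * (S.R0V - fi S p i t) :=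
    Dfi_bound' S hN p i ht (hhp p hp) (hself p hp)
  have h2 : Dfi S (-p) i t ≤ S.K * (S.R0V - fi S (-p) i t) :=
    Dfi_bound' S hN (-p) i ht (hhp (-p) hnp) (hself (-p) hnp)
  rw [Dfi_neg S p i ht, fi_neg] at h2
  have hfiR := hself p hp
  have hfiR2 : - S.R0V ≤ fi S p i t := by
    have := hself (-p) hnp
    rw [fi_neg] at this
    linarith
  have hK := K_pos S
  rw [abs_le]
  constructor <;> nlinarith [hK.le]

/-- α is interval integrable on positive intervals -/
lemma alpha_ii {a b : ℝ} (ha : 0 ≤ a) (hab : a ≤ b) : IntervalIntegrable S.α volume a b := by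
  refine (_root_.intervalIntegrable_const (c := (1:ℝ))).mono_fun
    S.α_meas.aestronglyMeasurable ?_
  have : ∀ᵐ s ∂(MeasureTheory.volume.restrict (Set.uIoc a b)), ‖S.α s‖ ≤ ‖(1:ℝ)‖ := by
    rw [Set.uIoc_of_le hab, MeasureTheory.ae_restrict_iff' measurableSet_Ioc]
    refine MeasureTheory.ae_of_all _ (fun s hs => ?_)
    have h2 := S.α_mem s (le_trans ha hs.1.le)
    rw [Real.norm_eq_abs, Real.norm_eq_abs, abs_of_nonneg h2.1, abs_of_nonneg zero_le_one]
    exact h2.2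
  exact this

/-- exponential propagation of gaps -/
lemma gap_propagate (hN : 2 ≤ N) (p : EuclideanSpace ℝ (Fin d)) (i : Fin N)
    {a b B ε : ℝ} (ha : 0 ≤ a)
    (hhist : ∀ t ∈ Ioo a b, ∀ j, ∀ s ∈ Icc (t - S.τ2 t) (t - S.τ1 t), fi S p j s ≤ B)
    (hself : ∀ t ∈ Icc a b, fi S p i t ≤ B)
    (hε0 : 0 ≤ ε) (hε : ε ≤ B - fi S p i a) :
    ∀ t ∈ Icc a b, Real.exp (S.K * (a - t)) * ε ≤ B - fi S p i t := by
  intro t ht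
  have hmono := mono_exp S hN p i ha hhist hself
  have h1 := hmono ⟨le_rfl, le_trans ht.1 ht.2⟩ ht ht.1
  simp only at h1
  have he1 := Real.exp_pos (S.K * a)
  have he2 := Real.exp_pos (S.K * t)
  rw [show S.K * (a - t) = S.K * a - S.K * t by ring, Real.exp_sub, div_mul_eq_mul_div,
    div_le_iff₀ he2]
  nlinarith [mul_le_mul_of_nonneg_left hε he1.le]

/-- convenient history bound from the window max -/
lemma hist_ok (hN : 2 ≤ N) (p : EuclideanSpace ℝ (Fin d)) {t0 a b B : ℝ} (ht0 : 0 ≤ t0)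
    (ha : t0 ≤ a) (hB : MB S p t0 ≤ B) :
    ∀ t ∈ Ioo a b, ∀ j, ∀ s ∈ Icc (t - S.τ2 t) (t - S.τ1 t), fi S p j s ≤ B := by
  intro t ht j s hs
  have h1 := (hist_sub S (by linarith [ht.1]) hs).1
  refine le_trans (hist_le_MB S hN p ht0 j s (by linarith [ht.1])) hB

lemma self_ok (hN : 2 ≤ N) (p : EuclideanSpace ℝ (Fin d)) {t0 a b B : ℝ} (ht0 : 0 ≤ t0)
    (ha : t0 - S.τbar ≤ a) (hB : MB S p t0 ≤ B) (i : Fin N) :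
    ∀ t ∈ Icc a b, fi S p i t ≤ B := fun t ht =>
  le_trans (hist_le_MB S hN p ht0 i t (by linarith [ht.1])) hB

end Helpers


/-- the persistence-of-excitation gain step: if agent `k0` stays low on the 3T window,
then every other agent has dropped by a definite amount at time `t0 + τbar + T`. -/
lemma gain_step (S : CSD d N) (hN : 2 ≤ N) {p : EuclideanSpace ℝ (Fin d)} (hp : ‖p‖ = 1)
    {T αt t0 η ε0 : ℝ} (hT : 0 < T) (hTτ : S.τbar ≤ T) (hαt : 0 < αt)
    (hPE : ∀ t, 0 ≤ t → αt ≤ ∫ s in t..(t + T), S.α s)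
    (ht0 : 0 ≤ t0) (i' k0 : Fin N) (hne : k0 ≠ i') (hε0 : 0 ≤ ε0) (hη : 0 ≤ η)
    (hk0low : ∀ t ∈ Icc t0 (t0 + 3*T), fi S p k0 t ≤ MB S p t0 - ε0)
    (hψlow : ∀ u ∈ Icc (t0 + S.τbar) (t0 + S.τbar + T), ∀ σ ∈ Icc (u - S.τ2 u) (u - S.τ1 u),
      η ≤ S.ψ ‖S.x i' u - S.x k0 σ‖) :
    fi S p i' (t0 + S.τbar + T)
      ≤ MB S p t0 - Real.exp (-(S.K*T)) * ((η/((N:ℝ)-1)) * ε0) * αt := by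
  have hτ := taubar_pos S
  have hK := K_pos S
  have hR0 := R0V_nonneg S hN
  have hNR := Ncast hN
  set M := MB S p t0 with hM
  set t1 := t0 + S.τbar with ht1def
  set t2 := t0 + S.τbar + T with ht2def
  have ht1pos : 0 < t1 := by rw [ht1def]; linarith
  have ht12 : t1 ≤ t2 := by rw [ht1def, ht2def]; linarith
  have ht2le3 : t2 ≤ t0 + 3*T := by rw [ht2def]; linarith
  set g := fun u => Real.exp (S.K * u) * (M - fi S p i' u) with hg
  have hgd : ∀ u : ℝ, 0 < u → HasDerivAt g
      (Real.exp (S.K*u) * S.K * (M - fi S p i' u) + Real.exp (S.K*u) * (-(Dfi S p i' u))) u := by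
    intro u hu
    have hexp : HasDerivAt (fun w => Real.exp (S.K * w)) (Real.exp (S.K * u) * S.K) u := by
      simpa using ((hasDerivAt_id u).const_mul S.K).exp
    exact hexp.mul ((hasDerivAt_fi' S p i' hu).const_sub M)
  have hderiv_eq : ∀ u : ℝ, 0 < u → deriv g u
      = Real.exp (S.K*u) * S.K * (M - fi S p i' u) + Real.exp (S.K*u) * (-(Dfi S p i' u)) :=
    fun u hu => (hgd u hu).deriv
  have hMR : M ≤ S.R0V := MB_le_R0V S hN hp ht0
  have hnp : ‖-p‖ = 1 := by rw [norm_neg]; exact hp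
  set Cg := Real.exp (S.K * t2) * (S.K * (2*S.R0V) + 2*S.K*S.R0V) with hCg
  have hbd : ∀ u ∈ Set.uIoc t1 t2, ‖deriv g u‖ ≤ Cg := by
    intro u hu
    rw [Set.uIoc_of_le ht12] at hu
    have hupos : 0 < u := lt_trans ht1pos hu.1
    rw [hderiv_eq u hupos, Real.norm_eq_abs]
    have habs := Dfi_abs S hN hp i' hupos
    have hfiup : fi S p i' u ≤ S.R0V := fi_le_R0V S hN hp i' (by linarith)
    have hfidn : - S.R0V ≤ fi S p i' u := by
      have := fi_le_R0V S hN hnp i' (show -S.τbar ≤ u by linarith)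
      rw [fi_neg] at this
      linarith
    have hMfi : fi S p i' u ≤ M := hist_le_MB S hN p ht0 i' u (by linarith [hu.1.le])
    have hexpmono : Real.exp (S.K*u) ≤ Real.exp (S.K*t2) :=
      Real.exp_le_exp.mpr (mul_le_mul_of_nonneg_left hu.2 hK.le)
    have hexpu := Real.exp_pos (S.K*u)
    rw [abs_le]
    have habs' := abs_le.mp habs
    have h2R : M - fi S p i' u ≤ 2*S.R0V := by linarith
    have hM0 : 0 ≤ M - fi S p i' u := by linarith
    have hKR : (0:ℝ) ≤ 2*S.K*S.R0V := by positivity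
    have hA1 : Real.exp (S.K*u) * S.K * (M - fi S p i' u)
        ≤ Real.exp (S.K*t2) * (S.K*(2*S.R0V)) := by
      have hh : Real.exp (S.K*u) * S.K * (M - fi S p i' u)
          = Real.exp (S.K*u) * (S.K * (M - fi S p i' u)) := by ring
      rw [hh]
      refine mul_le_mul hexpmono (by nlinarith) (by positivity) (Real.exp_pos _).le
    have hA0 : 0 ≤ Real.exp (S.K*u) * S.K * (M - fi S p i' u) := by positivity
    have hA2 : Real.exp (S.K*u) * (-(Dfi S p i' u)) ≤ Real.exp (S.K*t2) * (2*S.K*S.R0V) := by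
      calc Real.exp (S.K*u) * (-(Dfi S p i' u)) ≤ Real.exp (S.K*u) * (2*S.K*S.R0V) :=
            mul_le_mul_of_nonneg_left (by linarith [habs'.1]) hexpu.le
        _ ≤ Real.exp (S.K*t2) * (2*S.K*S.R0V) := mul_le_mul_of_nonneg_right hexpmono hKR
    have hA3 : -(Real.exp (S.K*t2) * (2*S.K*S.R0V)) ≤ Real.exp (S.K*u) * (-(Dfi S p i' u)) := by
      have hB := mul_le_mul_of_nonneg_left habs'.2 hexpu.le
      have hB2 : Real.exp (S.K*u) * (2*S.K*S.R0V) ≤ Real.exp (S.K*t2) * (2*S.K*S.R0V) :=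
        mul_le_mul_of_nonneg_right hexpmono hKR
      rw [mul_neg]
      linarith
    have hCg' : Cg = Real.exp (S.K*t2) * (S.K*(2*S.R0V)) + Real.exp (S.K*t2) * (2*S.K*S.R0V) := by
      rw [hCg]; ring
    have hpos2 : 0 ≤ Real.exp (S.K*t2) * (S.K*(2*S.R0V)) := by positivity
    constructor
    · linarith
    · linarith
  have hii : IntervalIntegrable (deriv g) MeasureTheory.volume t1 t2 := by
    rw [intervalIntegrable_iff]
    have hconst : MeasureTheory.IntegrableOn (fun _ => Cg) (Set.uIoc t1 t2) MeasureTheory.volume :=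
      MeasureTheory.integrableOn_const (by rw [Set.uIoc_of_le ht12]; exact measure_Ioc_lt_top.ne)
    refine MeasureTheory.Integrable.mono' hconst
      (measurable_deriv g).aestronglyMeasurable.restrict ?_
    rw [MeasureTheory.ae_restrict_iff' measurableSet_uIoc]
    exact MeasureTheory.ae_of_all _ hbd
  have hftc : ∫ u in t1..t2, deriv g u = g t2 - g t1 := by
    refine intervalIntegral.integral_eq_sub_of_hasDerivAt (fun u hu => ?_) hii
    rw [Set.uIcc_of_le ht12] at hu
    have hupos : 0 < u := lt_of_lt_of_le ht1pos hu.1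
    rw [hderiv_eq u hupos]
    exact hgd u hupos
  set c0 := (η / ((N:ℝ)-1)) * ε0 with hc0
  have hc0nn : 0 ≤ c0 := mul_nonneg (div_nonneg hη (by linarith)) hε0
  have hlow : ∀ u ∈ Icc t1 t2, Real.exp (S.K*t1) * c0 * S.α u ≤ deriv g u := by
    intro u hu
    have hupos : 0 < u := lt_of_lt_of_le ht1pos hu.1
    have hα := S.α_mem u hupos.le
    have hDb : Dfi S p i' u ≤ S.K * (M - fi S p i' u) - S.α u * (η / ((N:ℝ)-1)) * ε0 :=
      deriv_bound S hN p hupos i' k0 hne hε0 hη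
      (fun j s hs => hist_le_MB S hN p ht0 j s
        (by have := (hist_sub S hupos.le hs).1; have h2 := hu.1; rw [ht1def] at h2; linarith))
      (hist_le_MB S hN p ht0 i' u (by have h2 := hu.1; rw [ht1def] at h2; linarith))
      (fun s hs => by
        have h1 := (hist_sub S hupos.le hs).1
        have h2 := (hist_sub S hupos.le hs).2
        have h3 := hu.1
        have h4 := hu.2
        rw [ht1def] at h3
        exact hk0low s ⟨by linarith, by linarith⟩)
      (hψlow u hu)
    rw [hderiv_eq u hupos]
    have hexpu := Real.exp_pos (S.K*u)
    have hexpmono : Real.exp (S.K*t1) ≤ Real.exp (S.K*u) :=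
      Real.exp_le_exp.mpr (mul_le_mul_of_nonneg_left hu.1 hK.le)
    have h5 : S.α u * (η / ((N:ℝ)-1)) * ε0 = S.α u * c0 := by rw [hc0]; ring
    have h6 : S.α u * c0 ≤ S.K * (M - fi S p i' u) - Dfi S p i' u := by
      rw [← h5]; linarith [hDb]
    have h1 : Real.exp (S.K*u) * (S.α u * c0)
        ≤ Real.exp (S.K*u) * (S.K * (M - fi S p i' u) - Dfi S p i' u) :=
      mul_le_mul_of_nonneg_left h6 hexpu.le
    have h2 : Real.exp (S.K*t1) * (S.α u * c0) ≤ Real.exp (S.K*u) * (S.α u * c0) :=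
      mul_le_mul_of_nonneg_right hexpmono (mul_nonneg hα.1 hc0nn)
    have h3 : Real.exp (S.K*t1) * c0 * S.α u = Real.exp (S.K*t1) * (S.α u * c0) := by ring
    have h4 : Real.exp (S.K*u) * S.K * (M - fi S p i' u) + Real.exp (S.K*u) * (-(Dfi S p i' u))
        = Real.exp (S.K*u) * (S.K * (M - fi S p i' u) - Dfi S p i' u) := by ring
    rw [h3, h4]
    exact le_trans h2 h1
  have hlowint : IntervalIntegrable (fun u => Real.exp (S.K*t1) * c0 * S.α u)
      MeasureTheory.volume t1 t2 := (alpha_ii S ht1pos.le ht12).const_mul _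
  have hmono2 := intervalIntegral.integral_mono_on ht12 hlowint hii hlow
  have hconst : (∫ u in t1..t2, Real.exp (S.K*t1) * c0 * S.α u)
      = Real.exp (S.K*t1) * c0 * ∫ u in t1..t2, S.α u := by
    rw [← intervalIntegral.integral_const_mul]
  have hPEt1 := hPE t1 (by linarith)
  have hg1 : 0 ≤ g t1 := by
    have : fi S p i' t1 ≤ M := hist_le_MB S hN p ht0 i' t1 (by rw [ht1def]; linarith)
    exact mul_nonneg (Real.exp_pos _).le (by linarith)
  have hfin : Real.exp (S.K*t1) * c0 * αt ≤ g t2 := by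
    have h7 : Real.exp (S.K*t1) * c0 * αt ≤ Real.exp (S.K*t1) * c0 * ∫ u in t1..t2, S.α u := by
      refine mul_le_mul_of_nonneg_left ?_ (mul_nonneg (Real.exp_pos _).le hc0nn)
      exact hPEt1
    rw [hconst] at hmono2
    linarith [hftc ▸ hmono2]
  have hexp2 := Real.exp_pos (S.K * t2)
  have key : Real.exp (-(S.K*T)) * c0 * αt ≤ M - fi S p i' t2 := by
    have hTc : -(S.K*T) = S.K*t1 - S.K*t2 := by rw [ht1def, ht2def]; ring
    rw [hTc, Real.exp_sub, div_mul_eq_mul_div, div_mul_eq_mul_div, div_le_iff₀ hexp2]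
    calc Real.exp (S.K*t1) * c0 * αt ≤ g t2 := hfin
      _ = (M - fi S p i' t2) * Real.exp (S.K*t2) := mul_comm _ _
  linarith [key]


lemma Epow_le {K T y : ℝ} (hK : 0 ≤ K) (n : ℕ) (hy : -((n:ℝ)*T) ≤ y) :
    (Real.exp (-(K*T)))^n ≤ Real.exp (K*y) := by
  rw [← Real.exp_nat_mul]
  apply Real.exp_le_exp.mpr
  have h : (n:ℝ)*(-(K*T)) = K*(-((n:ℝ)*T)) := by ring
  rw [h]
  exact mul_le_mul_of_nonneg_left hy hK

set_option maxHeartbeats 1000000 in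
/-- the contraction estimate over a 3T window -/
lemma contraction (S : CSD d N) (hN : 2 ≤ N) {T αt : ℝ} (hT : 0 < T) (hTτ : S.τbar ≤ T)
    (hαt : 0 < αt) (hPE : ∀ t, 0 ≤ t → αt ≤ ∫ s in t..(t + T), S.α s)
    {t0 PX η : ℝ} (ht0 : 0 ≤ t0)
    (hPX : ∀ t ∈ Icc (-S.τbar) (t0 + 3*T), S.dX t ≤ PX)
    (hη : 0 ≤ η) (hηK : η ≤ S.K) (hαT : αt ≤ T)
    (hηle : ∀ r ∈ Icc (0:ℝ) (PX + S.τbar * S.R0V), η ≤ S.ψ r) :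
    FB S (t0 + 3*T) ≤ (1 - αt * η * Real.exp (-(7*S.K*T)) / (2*((N:ℝ)-1))) * FB S t0 := by
  have hK := K_pos S
  have hτ := taubar_pos S
  have hNR := Ncast hN
  have hNpos : (0:ℝ) < (N:ℝ) - 1 := by linarith
  have hR0 := R0V_nonneg S hN
  obtain ⟨E, hEdef⟩ : ∃ E, E = Real.exp (-(S.K*T)) := ⟨_, rfl⟩
  have hE0 : 0 < E := hEdef ▸ Real.exp_pos _
  have hE1 : E ≤ 1 := by
    rw [hEdef, ← Real.exp_zero]
    exact Real.exp_le_exp.mpr (by nlinarith)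
  have hEK : S.K*T*E ≤ 1 := by
    have := xexp_le_one (show (0:ℝ) ≤ S.K*T by positivity)
    rw [hEdef]
    exact this
  have hA1 : αt*η*E ≤ 1 := by
    have h1 : αt*η ≤ S.K*T := by nlinarith
    nlinarith
  have hA1' : αt*η*E ≤ (N:ℝ)-1 := le_trans hA1 hNR
  obtain ⟨θ, hθdef⟩ : ∃ θ, θ = αt * η * Real.exp (-(7*S.K*T)) / (2*((N:ℝ)-1)) := ⟨_, rfl⟩
  have hE7 : Real.exp (-(7*S.K*T)) = E^7 := by
    rw [hEdef, ← Real.exp_nat_mul]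
    congr 1
    push_cast
    ring
  have hθE : θ = αt*η*E^7/(2*((N:ℝ)-1)) := by rw [hθdef, hE7]
  have hθnn : 0 ≤ θ := by
    rw [hθE]
    exact div_nonneg (by positivity) (by linarith)
  have hE63 : E^6 ≤ E^3 := pow_le_pow_of_le_one hE0.le hE1 (by norm_num)
  have hθhalf : θ ≤ E^3/2 := by
    rw [hθE, div_le_div_iff₀ (by linarith) two_pos]
    have h1 : αt*η*E^7 = (αt*η*E)*E^6 := by ring
    have h2 : (αt*η*E)*E^6 ≤ ((N:ℝ)-1)*E^6 :=
      mul_le_mul_of_nonneg_right hA1' (by positivity)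
    have h3 : ((N:ℝ)-1)*E^6 ≤ ((N:ℝ)-1)*E^3 := mul_le_mul_of_nonneg_left hE63 (by linarith)
    nlinarith
  have hθ1 : θ ≤ 1/2 := le_trans hθhalf (by nlinarith [pow_le_one₀ hE0.le hE1 (n := 3)])
  refine csSup_le (FB_nonempty S hN _) ?_
  rintro r ⟨i, j, s', hs', u', hu', rfl⟩
  have hW3s : t0 + 3*T - S.τbar ≤ s' := hs'.1
  have hW3u : t0 + 3*T - S.τbar ≤ u' := hu'.1
  rcases eq_or_ne (S.v i s' - S.v j u') 0 with h0 | h0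
  · rw [h0, norm_zero]
    exact mul_nonneg (by linarith) (FB_nonneg S hN t0)
  -- choose the unit direction
  obtain ⟨w, hw⟩ : ∃ w, w = S.v i s' - S.v j u' := ⟨_, rfl⟩
  obtain ⟨p, hpdef⟩ : ∃ p, p = ‖w‖⁻¹ • w := ⟨_, rfl⟩
  have hp : ‖p‖ = 1 := by rw [hpdef]; exact norm_smul_inv_norm (hw ▸ h0)
  have hnp : ‖-p‖ = 1 := by rw [norm_neg]; exact hp
  obtain ⟨M, hMdef⟩ : ∃ M, M = MB S p t0 := ⟨_, rfl⟩
  obtain ⟨m, hmdef⟩ : ∃ m, m = - MB S (-p) t0 := ⟨_, rfl⟩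
  have hup : ∀ k, ∀ t, t0 - S.τbar ≤ t → fi S p k t ≤ M := fun k t ht =>
    hMdef ▸ hist_le_MB S hN p ht0 k t ht
  have hlo : ∀ k, ∀ t, t0 - S.τbar ≤ t → m ≤ fi S p k t := by
    intro k t ht
    have := hist_le_MB S hN (-p) ht0 k t ht
    rw [fi_neg] at this
    rw [hmdef]
    linarith
  have hMm : m ≤ M := by
    have h1 := hup ⟨0, finN_pos hN⟩ t0 (by linarith)
    have h2 := hlo ⟨0, finN_pos hN⟩ t0 (by linarith)
    linarith
  obtain ⟨D, hDdef⟩ : ∃ D, D = M - m := ⟨_, rfl⟩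
  have hD0 : 0 ≤ D := by rw [hDdef]; linarith
  have hDle : D ≤ FB S t0 := by
    have := MB_add_le S hN hp t0
    rw [hDdef, hMdef, hmdef]
    linarith
  -- the norm as a difference of observables
  have hsplit : ‖S.v i s' - S.v j u'‖ = fi S p i s' - fi S p j u' := by
    have h1 : ‖w‖ = ⟪p, w⟫ := by
      rw [hpdef, real_inner_smul_left, real_inner_self_eq_norm_mul_norm]
      have h0' : w ≠ 0 := hw ▸ h0
      field_simp
    rw [← hw, h1, hw]
    simp [fi, inner_sub_right]
  -- the main dichotomy
  have hdicho : (∀ k, ∀ t ∈ Icc (t0 + 3*T - S.τbar) (t0 + 3*T), fi S p k t ≤ M - θ*D)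
      ∨ (∀ k, ∀ t ∈ Icc t0 (t0 + 3*T), m + θ*D ≤ fi S p k t) := by
    by_cases hcase : ∃ k0, fi S p k0 t0 < (M + m)/2
    · -- some agent is low at t0 : the maximum decays
      left
      obtain ⟨k0, hk0⟩ := hcase
      -- step 1 : k0 stays low on the whole window
      have step1 : ∀ t ∈ Icc t0 (t0+3*T), E^3 * (D/2) ≤ M - fi S p k0 t := by
        intro t ht
        have hgp := gap_propagate S hN p k0 (a := t0) (b := t0+3*T) ht0
          (hist_ok S hN p ht0 le_rfl le_rfl)
          (self_ok S hN p ht0 (by linarith) le_rfl k0)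
          (show 0 ≤ D/2 by linarith)
          (by rw [← hMdef, hDdef]; linarith [hup k0 t0 (by linarith)])
          t ht
        rw [← hMdef] at hgp
        refine le_trans ?_ hgp
        refine mul_le_mul_of_nonneg_right ?_ (by linarith)
        rw [hEdef]
        refine Epow_le hK.le 3 ?_
        push_cast
        linarith [ht.2]
      obtain ⟨ε0, hε0def⟩ : ∃ e, e = E^3 * (D/2) := ⟨_, rfl⟩
      have hε0nn : 0 ≤ ε0 := by
        rw [hε0def]
        exact mul_nonneg (pow_nonneg hE0.le 3) (by linarith)
      have hqnn : 0 ≤ η/((N:ℝ)-1) := div_nonneg hη (by linarith)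
      obtain ⟨ε1, hε1def⟩ : ∃ e, e = E * ((η/((N:ℝ)-1)) * ε0) * αt := ⟨_, rfl⟩
      have hε1nn : 0 ≤ ε1 := by
        rw [hε1def]
        exact mul_nonneg (mul_nonneg hE0.le (mul_nonneg hqnn hε0nn)) hαt.le
      have hq : η/((N:ℝ)-1) * ((N:ℝ)-1) = η := div_mul_cancel₀ _ hNpos.ne'
      have hqE : αt * (η/((N:ℝ)-1)) * E ≤ 1 := by
        rw [← mul_le_mul_iff_of_pos_right hNpos]
        calc αt * (η/((N:ℝ)-1)) * E * ((N:ℝ)-1)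
            = αt * (η/((N:ℝ)-1) * ((N:ℝ)-1)) * E := by ring
          _ = αt * η * E := by rw [hq]
          _ ≤ (N:ℝ)-1 := hA1'
          _ = 1 * ((N:ℝ)-1) := (one_mul _).symm
      have hε1ε0 : ε1 ≤ ε0 := by
        have h2 : αt * (η/((N:ℝ)-1)) * E * ε0 ≤ 1 * ε0 := mul_le_mul_of_nonneg_right hqE hε0nn
        calc ε1 = αt * (η/((N:ℝ)-1)) * E * ε0 := by rw [hε1def]; ring
          _ ≤ 1 * ε0 := h2
          _ = ε0 := one_mul _
      -- step 2 : at time t2 every agent has decayed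
      obtain ⟨t2, ht2def⟩ : ∃ x, x = t0 + S.τbar + T := ⟨_, rfl⟩
      have step2 : ∀ k, fi S p k t2 ≤ M - ε1 := by
        intro k
        rcases eq_or_ne k k0 with hkk | hkk
        · rw [hkk]
          have := step1 t2 ⟨by rw [ht2def]; linarith, by rw [ht2def]; linarith⟩
          rw [← hε0def] at this
          linarith
        · have hψlow : ∀ u ∈ Icc (t0 + S.τbar) (t0 + S.τbar + T),
              ∀ σ ∈ Icc (u - S.τ2 u) (u - S.τ1 u), η ≤ S.ψ ‖S.x k u - S.x k0 σ‖ := by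
            intro u hu σ hσ
            have hu0 : (0:ℝ) < u := by linarith [hu.1]
            have hσ1 := (hist_sub S hu0.le hσ).1
            have hσ2 := (hist_sub S hu0.le hσ).2
            have hσ0 : (0:ℝ) ≤ σ := by linarith [hu.1]
            refine hηle _ ⟨norm_nonneg _, ?_⟩
            have htri : ‖S.x k u - S.x k0 σ‖
                ≤ ‖S.x k u - S.x k0 u‖ + ‖S.x k0 u - S.x k0 σ‖ := by
              have hd := dist_triangle (S.x k u) (S.x k0 u) (S.x k0 σ)
              simpa [dist_eq_norm] using hd
            have hdX : ‖S.x k u - S.x k0 u‖ ≤ PX := by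
              refine le_trans (le_dX S k k0 u) (hPX u ⟨by linarith, by linarith [hu.2]⟩)
            have hxinc : ‖S.x k0 u - S.x k0 σ‖ ≤ S.τbar * S.R0V := by
              refine le_trans (x_inc S hN k0 hσ0 hσ2) ?_
              have : u - σ ≤ S.τbar := by linarith
              exact mul_le_mul_of_nonneg_right this hR0
            linarith
          have hk0low : ∀ t ∈ Icc t0 (t0 + 3*T), fi S p k0 t ≤ MB S p t0 - ε0 := by
            intro t ht
            have := step1 t ht
            rw [← hε0def] at this
            rw [← hMdef]
            linarith
          have := gain_step S hN hp hT hTτ hαt hPE ht0 k k0 (Ne.symm hkk) hε0nn hη hk0low hψlow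
          rw [← hMdef, ← hEdef] at this
          rw [ht2def, hε1def]
          exact this
      -- step 3 : propagate to the final window
      intro k t ht
      have ht2le : t2 ≤ t0 + 3*T - S.τbar := by rw [ht2def]; linarith
      have ht2nn : 0 ≤ t2 := by rw [ht2def]; linarith
      have hgp := gap_propagate S hN p k (a := t2) (b := t0+3*T) ht2nn
        (hist_ok S hN p ht0 (by rw [ht2def]; linarith) le_rfl)
        (self_ok S hN p ht0 (by rw [ht2def]; linarith) le_rfl k)
        hε1nn (by rw [← hMdef]; linarith [step2 k])
        t ⟨le_trans ht2le ht.1, ht.2⟩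
      rw [← hMdef] at hgp
      have hE2 : E^2 ≤ Real.exp (S.K*(t2 - t)) := by
        rw [hEdef]
        refine Epow_le hK.le 2 ?_
        push_cast
        rw [ht2def]
        linarith [ht.2]
      have hfinal : θ*D ≤ E^2 * ε1 := by
        have h1 : E^2*ε1 = αt*(η/((N:ℝ)-1))*E^6*(D/2) := by
          rw [hε1def, hε0def]; ring
        have h2 : θ = αt*(η/((N:ℝ)-1))*E^7*(1/2) := by
          rw [hθE, div_eq_mul_inv, mul_inv]
          rw [div_eq_mul_inv]
          ring
        rw [h1, h2]
        have h7 : E^7 ≤ E^6 := pow_le_pow_of_le_one hE0.le hE1 (by norm_num)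
        have hco : 0 ≤ αt*(η/((N:ℝ)-1)) := mul_nonneg hαt.le hqnn
        calc αt*(η/((N:ℝ)-1))*E^7*(1/2)*D = (αt*(η/((N:ℝ)-1)))*E^7*(D/2) := by ring
          _ ≤ (αt*(η/((N:ℝ)-1)))*E^6*(D/2) := by
              refine mul_le_mul_of_nonneg_right (mul_le_mul_of_nonneg_left h7 hco) (by linarith)
          _ = αt*(η/((N:ℝ)-1))*E^6*(D/2) := by ring
      have : E^2 * ε1 ≤ Real.exp (S.K*(t2-t)) * ε1 := mul_le_mul_of_nonneg_right hE2 hε1nn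
      linarith
    · -- all agents are high at t0 : the minimum increases
      right
      push_neg at hcase
      intro k t ht
      have hgp := gap_propagate S hN (-p) k (a := t0) (b := t0+3*T) ht0
        (hist_ok S hN (-p) ht0 le_rfl le_rfl)
        (self_ok S hN (-p) ht0 (by linarith) le_rfl k)
        (show 0 ≤ D/2 by linarith)
        (by
          rw [fi_neg]
          have := hcase k
          rw [hDdef]
          have hm' : MB S (-p) t0 = -m := by rw [hmdef]; ring
          rw [hm']
          linarith)
        t ht
      rw [fi_neg] at hgp
      have hm' : MB S (-p) t0 = -m := by rw [hmdef]; ring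
      rw [hm'] at hgp
      have hE3 : E^3 ≤ Real.exp (S.K*(t0 - t)) := by
        rw [hEdef]
        refine Epow_le hK.le 3 ?_
        push_cast
        linarith [ht.2]
      have h1 : E^3 * (D/2) ≤ Real.exp (S.K*(t0-t)) * (D/2) :=
        mul_le_mul_of_nonneg_right hE3 (by linarith)
      have h2 : θ*D ≤ E^3*(D/2) := by nlinarith [hθhalf]
      linarith
  -- conclude
  rw [hsplit]
  have h3 : (1-θ)*D = D - θ*D := by ring
  rcases hdicho with hL | hR
  · have h1 := hL i s' hs'
    have h2 := hlo j u' (by linarith)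
    rw [hDdef] at h1
    have : fi S p i s' - fi S p j u' ≤ (1-θ)*D := by
      rw [h3, hDdef]
      linarith
    refine le_trans this ?_
    rw [← hθdef]
    exact mul_le_mul_of_nonneg_left hDle (by linarith)
  · have h1 := hup i s' (by linarith)
    have h2 := hR j u' ⟨by linarith, hu'.2⟩
    rw [hDdef] at h2
    have : fi S p i s' - fi S p j u' ≤ (1-θ)*D := by
      rw [h3, hDdef]
      linarith
    refine le_trans this ?_
    rw [← hθdef]
    exact mul_le_mul_of_nonneg_left hDle (by linarith)


section Potential
variable (S : CSD d N)

/-- running sup of the position diameter -/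
noncomputable def PP (T : ℝ) (m : ℕ) : ℝ := sSup (S.dX '' Icc (-S.τbar) ((m:ℝ)*T))

lemma dX_bounded_on (hN : 2 ≤ N) (a b : ℝ) : ∃ C, ∀ t ∈ Icc a b, S.dX t ≤ C := by
  have hA : IsCompact (⋃ (i : Fin N), (fun s => ‖S.x i s‖) '' Icc a b) :=
    isCompact_iUnion fun i => isCompact_Icc.image (S.x_cont i).norm
  obtain ⟨C, hC⟩ := hA.bddAbove
  refine ⟨2*C, fun t ht => dX_le S hN (fun i j => ?_)⟩
  have h1 : ‖S.x i t‖ ≤ C := hC (Set.mem_iUnion.mpr ⟨i, t, ht, rfl⟩)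
  have h2 : ‖S.x j t‖ ≤ C := hC (Set.mem_iUnion.mpr ⟨j, t, ht, rfl⟩)
  calc ‖S.x i t - S.x j t‖ ≤ ‖S.x i t‖ + ‖S.x j t‖ := norm_sub_le _ _
    _ ≤ 2*C := by linarith

lemma PP_bdd (hN : 2 ≤ N) (T : ℝ) (m : ℕ) : BddAbove (S.dX '' Icc (-S.τbar) ((m:ℝ)*T)) := by
  obtain ⟨C, hC⟩ := dX_bounded_on S hN (-S.τbar) ((m:ℝ)*T)
  exact ⟨C, by rintro r ⟨t, ht, rfl⟩; exact hC t ht⟩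

lemma PP_ne {T : ℝ} (hT : 0 < T) (m : ℕ) : (S.dX '' Icc (-S.τbar) ((m:ℝ)*T)).Nonempty := by
  refine ⟨S.dX (-S.τbar), ⟨-S.τbar, ⟨le_rfl, ?_⟩, rfl⟩⟩
  have h1 := taubar_pos S
  have h2 : (0:ℝ) ≤ (m:ℝ)*T := by positivity
  linarith

lemma le_PP (hN : 2 ≤ N) {T : ℝ} (hT : 0 < T) (m : ℕ) {t : ℝ}
    (ht : t ∈ Icc (-S.τbar) ((m:ℝ)*T)) : S.dX t ≤ PP S T m :=
  le_csSup (PP_bdd S hN T m) ⟨t, ht, rfl⟩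

lemma PP_mono (hN : 2 ≤ N) {T : ℝ} (hT : 0 < T) {m m' : ℕ} (h : m ≤ m') :
    PP S T m ≤ PP S T m' := by
  refine csSup_le_csSup (PP_bdd S hN T m') (PP_ne S hT m) ?_
  refine Set.image_mono (Set.Icc_subset_Icc le_rfl ?_)
  have : (m:ℝ) ≤ (m':ℝ) := by exact_mod_cast h
  nlinarith

lemma PP_nonneg (hN : 2 ≤ N) {T : ℝ} (hT : 0 < T) (m : ℕ) : 0 ≤ PP S T m := by
  refine le_trans (dX_nonneg S hN (-S.τbar)) (le_PP S hN hT m ⟨le_rfl, ?_⟩)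
  have h1 := taubar_pos S
  have h2 : (0:ℝ) ≤ (m:ℝ)*T := by positivity
  linarith

lemma PP_succ3 (hN : 2 ≤ N) {T : ℝ} (hT : 0 < T) (m : ℕ) :
    PP S T (m+3) ≤ PP S T m + 3*T*FB S ((m:ℝ)*T) := by
  have hFB0 := FB_nonneg S hN ((m:ℝ)*T)
  have hmT : (0:ℝ) ≤ (m:ℝ)*T := by positivity
  refine csSup_le (PP_ne S hT (m+3)) ?_
  rintro r ⟨t, ht, rfl⟩
  rcases le_or_gt t ((m:ℝ)*T) with h1 | h1
  · have := le_PP S hN hT m ⟨ht.1, h1⟩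
    nlinarith
  · have hg := dX_growth S hN (t0 := (m:ℝ)*T) (a := (m:ℝ)*T) (b := t) hmT hmT
      (by linarith [taubar_pos S]) h1.le
    have h2 : S.dX ((m:ℝ)*T) ≤ PP S T m := le_PP S hN hT m ⟨by linarith [taubar_pos S], le_rfl⟩
    have h3 : t - (m:ℝ)*T ≤ 3*T := by
      have := ht.2
      push_cast at this
      nlinarith
    nlinarith [mul_le_mul_of_nonneg_right h3 hFB0]

/-- the truncated minimal influence function -/
noncomputable def gbar (z : ℝ) : ℝ := sInf (S.ψ '' Icc 0 (max 0 z))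

lemma gbar_bddBelow (z : ℝ) : BddBelow (S.ψ '' Icc 0 (max 0 z)) :=
  ⟨0, by rintro r ⟨x, _, rfl⟩; exact (S.ψ_pos x).le⟩

lemma gbar_ne (z : ℝ) : (S.ψ '' Icc 0 (max 0 z)).Nonempty :=
  ⟨S.ψ 0, 0, ⟨le_rfl, le_max_left _ _⟩, rfl⟩

lemma gbar_anti : Antitone (gbar S) := by
  intro z1 z2 h
  refine csInf_le_csInf (gbar_bddBelow S z2) (gbar_ne S z1) ?_
  exact Set.image_mono (Set.Icc_subset_Icc le_rfl (max_le_max le_rfl h))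

lemma gbar_nonneg (z : ℝ) : 0 ≤ gbar S z :=
  le_csInf (gbar_ne S z) (by rintro r ⟨x, _, rfl⟩; exact (S.ψ_pos x).le)

lemma gbar_le_K (z : ℝ) : gbar S z ≤ S.K :=
  le_trans (csInf_le (gbar_bddBelow S z) ⟨0, ⟨le_rfl, le_max_left _ _⟩, rfl⟩) (psi_le_K S 0)

lemma gbar_pos (z : ℝ) : 0 < gbar S z := by
  have hc : IsCompact (S.ψ '' Icc 0 (max 0 z)) :=
    isCompact_Icc.image S.ψ_cont
  have := hc.sInf_mem (gbar_ne S z)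
  obtain ⟨x, _, hx⟩ := this
  rw [gbar, ← hx]
  exact S.ψ_pos x

lemma gbar_le_psi {z : ℝ} (r : ℝ) (hr : r ∈ Icc (0:ℝ) z) : gbar S z ≤ S.ψ r :=
  csInf_le (gbar_bddBelow S z) ⟨r, ⟨hr.1, le_trans hr.2 (le_max_right _ _)⟩, rfl⟩

lemma gbar_meas : Measurable (gbar S) := (gbar_anti S).measurable

lemma bdd_meas_ii {f : ℝ → ℝ} (hf : Measurable f) {C : ℝ} (hC : ∀ x, |f x| ≤ C) (a b : ℝ) :
    IntervalIntegrable f MeasureTheory.volume a b := by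
  refine (_root_.intervalIntegrable_const (c := C)).mono_fun hf.aestronglyMeasurable ?_
  refine MeasureTheory.ae_of_all _ (fun x => ?_)
  simp only [Real.norm_eq_abs]
  exact le_trans (hC x) (le_abs_self C)

lemma gbar_ii (cshift a b : ℝ) :
    IntervalIntegrable (fun x => gbar S (cshift + x)) MeasureTheory.volume a b := by
  have hm : Measurable (fun x => gbar S (cshift + x)) :=
    (gbar_meas S).comp (measurable_const_add cshift)
  refine bdd_meas_ii hm (C := S.K) ?_ a b
  intro x
  rw [abs_of_nonneg (gbar_nonneg S _)]
  exact gbar_le_K S _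

/-- the potential -/
noncomputable def Phi (cshift y : ℝ) : ℝ := ∫ x in (0:ℝ)..y, gbar S (cshift + x)

lemma Phi_diff (cshift : ℝ) {y1 y2 : ℝ} :
    Phi S cshift y2 - Phi S cshift y1 = ∫ x in y1..y2, gbar S (cshift + x) := by
  have := intervalIntegral.integral_add_adjacent_intervals
    (gbar_ii S cshift 0 y1) (gbar_ii S cshift y1 y2)
  rw [Phi, Phi, ← this]
  ring

lemma Phi_mono (cshift : ℝ) {y1 y2 : ℝ} (h : y1 ≤ y2) :
    Phi S cshift y1 ≤ Phi S cshift y2 := by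
  have h2 : 0 ≤ ∫ x in y1..y2, gbar S (cshift + x) :=
    intervalIntegral.integral_nonneg h (fun u _ => gbar_nonneg S _)
  have := Phi_diff S cshift (y1 := y1) (y2 := y2)
  linarith

lemma Phi_inc_le (cshift : ℝ) {y1 y2 : ℝ} (h : y1 ≤ y2) :
    Phi S cshift y2 - Phi S cshift y1 ≤ gbar S (cshift + y1) * (y2 - y1) := by
  rw [Phi_diff S cshift]
  have hmono : ∀ x ∈ Icc y1 y2, gbar S (cshift + x) ≤ gbar S (cshift + y1) :=
    fun x hx => gbar_anti S (by linarith [hx.1])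
  calc (∫ x in y1..y2, gbar S (cshift + x)) ≤ ∫ _ in y1..y2, gbar S (cshift + y1) :=
      intervalIntegral.integral_mono_on h (gbar_ii S cshift y1 y2)
        (_root_.intervalIntegrable_const) hmono
    _ = (y2 - y1) * gbar S (cshift + y1) := by
        rw [intervalIntegral.integral_const, smul_eq_mul]
    _ = gbar S (cshift + y1) * (y2 - y1) := mul_comm _ _

/-- divergence of the influence integral makes the potential unbounded -/
lemma Phi_unbounded
    (hψdiv : ¬ MeasureTheory.IntegrableOn (fun x => sInf (S.ψ '' Icc 0 x)) (Set.Ioi 0))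
    {cshift : ℝ} (hc : 0 ≤ cshift) (C : ℝ) : ∃ y, 0 ≤ y ∧ C < Phi S cshift y := by
  by_contra hcon
  push_neg at hcon
  apply hψdiv
  have hgbar_int : MeasureTheory.IntegrableOn (gbar S) (Set.Ioi 0) := by
    refine MeasureTheory.integrableOn_Ioi_of_intervalIntegral_norm_bounded
      (C + cshift * S.K) 0 (fun n : ℕ => ?_) tendsto_natCast_atTop_atTop ?_
    · exact (bdd_meas_ii (gbar_meas S)
        (fun x => by rw [abs_of_nonneg (gbar_nonneg S _)]; exact gbar_le_K S _) 0 (n:ℝ)).1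
    · refine Filter.Eventually.of_forall (fun n => ?_)
      have hnn : (0:ℝ) ≤ (n:ℝ) := Nat.cast_nonneg n
      have hgeq : (∫ x in (0:ℝ)..(n:ℝ), ‖gbar S x‖) = ∫ x in (0:ℝ)..(n:ℝ), gbar S x := by
        refine intervalIntegral.integral_congr (fun x _ => ?_)
        exact Real.norm_of_nonneg (gbar_nonneg S x)
      rw [hgeq]
      have hKpos := K_pos S
      have hconst_le : ∀ a b : ℝ, 0 ≤ a → a ≤ b → (∫ x in a..b, gbar S x) ≤ (b - a) * S.K := by
        intro a b ha hab
        calc (∫ x in a..b, gbar S x) ≤ ∫ _ in a..b, S.K :=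
            intervalIntegral.integral_mono_on hab
              (bdd_meas_ii (gbar_meas S)
                (fun x => by rw [abs_of_nonneg (gbar_nonneg S _)]; exact gbar_le_K S _) a b)
              (_root_.intervalIntegrable_const) (fun x _ => gbar_le_K S x)
          _ = (b - a) * S.K := by rw [intervalIntegral.integral_const, smul_eq_mul]
      rcases le_or_gt (n:ℝ) cshift with h1 | h1
      · have := hconst_le 0 (n:ℝ) le_rfl hnn
        have hP0 : Phi S cshift 0 = 0 := by rw [Phi, intervalIntegral.integral_same]
        have hC0 : 0 ≤ C := by
          have h5 := hcon 0 le_rfl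
          rw [hP0] at h5
          linarith
        nlinarith
      · have hsplit := intervalIntegral.integral_add_adjacent_intervals
          (bdd_meas_ii (gbar_meas S)
            (fun x => by rw [abs_of_nonneg (gbar_nonneg S _)]; exact gbar_le_K S _) 0 cshift)
          (bdd_meas_ii (gbar_meas S)
            (fun x => by rw [abs_of_nonneg (gbar_nonneg S _)]; exact gbar_le_K S _) cshift (n:ℝ))
        have h2 : (∫ x in (0:ℝ)..cshift, gbar S x) ≤ cshift * S.K := by
          have := hconst_le 0 cshift le_rfl hc
          nlinarith
        have h3 : (∫ x in cshift..(n:ℝ), gbar S x) = Phi S cshift ((n:ℝ) - cshift) := by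
          rw [Phi, intervalIntegral.integral_comp_add_left (fun x => gbar S x) cshift]
          norm_num
        have h4 : Phi S cshift ((n:ℝ) - cshift) ≤ C := hcon _ (by linarith)
        rw [← hsplit]
        linarith [h3 ▸ h4]
  refine MeasureTheory.IntegrableOn.congr_fun hgbar_int ?_ measurableSet_Ioi
  intro x hx
  rw [gbar, max_eq_right (le_of_lt hx)]

end Potential


lemma alphaT (S : CSD d N) {T αt : ℝ} (hT : 0 < T)
    (hPE : ∀ t, 0 ≤ t → αt ≤ ∫ s in t..(t + T), S.α s) : αt ≤ T := by
  have h0 := hPE 0 le_rfl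
  have h1 : (∫ s in (0:ℝ)..(0 + T), S.α s) ≤ ∫ _ in (0:ℝ)..(0+T), (1:ℝ) := by
    refine intervalIntegral.integral_mono_on (by linarith) (alpha_ii S le_rfl (by linarith))
      _root_.intervalIntegrable_const (fun s hs => (S.α_mem s hs.1).2)
  rw [intervalIntegral.integral_const, smul_eq_mul] at h1
  have : (0 + T - 0) * 1 = T := by ring
  rw [this] at h1
  linarith

set_option maxHeartbeats 1000000 in
lemma PP_bounded (S : CSD d N) (hN : 2 ≤ N)
    (hψdiv : ¬ MeasureTheory.IntegrableOn (fun x => sInf (S.ψ '' Icc 0 x)) (Set.Ioi 0))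
    {T αt : ℝ} (hT : 0 < T) (hTτ : S.τbar ≤ T) (hαt : 0 < αt)
    (hPE : ∀ t, 0 ≤ t → αt ≤ ∫ s in t..(t + T), S.α s) :
    ∃ ystar, 0 ≤ ystar ∧ ∀ m : ℕ, PP S T m ≤ ystar := by
  have hK := K_pos S
  have hτ := taubar_pos S
  have hNR := Ncast hN
  have hR0 := R0V_nonneg S hN
  have hαT := alphaT S hT hPE
  obtain ⟨cs, hcsdef⟩ : ∃ c, c = S.τbar * S.R0V := ⟨_, rfl⟩
  have hcs0 : 0 ≤ cs := by rw [hcsdef]; positivity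
  obtain ⟨cc, hccdef⟩ : ∃ c, c = αt * Real.exp (-(7*S.K*T)) / (2*((N:ℝ)-1)) := ⟨_, rfl⟩
  have hcc : 0 < cc := by
    rw [hccdef]
    have := Real.exp_pos (-(7*S.K*T))
    apply div_pos (by positivity) (by linarith)
  -- the unconditional contraction chain
  have hcontr : ∀ q : ℕ, FB S (((q+3:ℕ):ℝ)*T)
      ≤ (1 - cc * gbar S (cs + PP S T (q+3))) * FB S ((q:ℝ)*T) := by
    intro q
    have hqT : (0:ℝ) ≤ (q:ℝ)*T := by positivity
    have hc := contraction S hN hT hTτ hαt hPE (t0 := (q:ℝ)*T) (PX := PP S T (q+3))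
      (η := gbar S (cs + PP S T (q+3))) hqT
      (fun t ht => le_PP S hN hT (q+3) ⟨ht.1, by push_cast; nlinarith [ht.2]⟩)
      (gbar_nonneg S _) (gbar_le_K S _) hαT
      (fun r hr => gbar_le_psi S r ⟨hr.1, by rw [hcsdef]; linarith [hr.2]⟩)
    have hcast : ((q:ℝ)*T + 3*T) = ((q+3:ℕ):ℝ)*T := by push_cast; ring
    rw [hcast] at hc
    have hco : αt * gbar S (cs + PP S T (q+3)) * Real.exp (-(7*S.K*T)) / (2*((N:ℝ)-1))
        = cc * gbar S (cs + PP S T (q+3)) := by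
      rw [hccdef]; ring
    rw [hco] at hc
    exact hc
  have hGanti : ∀ {a b : ℕ}, a ≤ b → FB S ((b:ℝ)*T) ≤ FB S ((a:ℝ)*T) := by
    intro a b hab
    refine FB_antitone S hN (by positivity) ?_
    have : (a:ℝ) ≤ (b:ℝ) := by exact_mod_cast hab
    nlinarith
  have hG0 : ∀ m : ℕ, 0 ≤ FB S ((m:ℝ)*T) := fun m => FB_nonneg S hN _
  -- telescoping bound
  have htel : ∀ q : ℕ, cc * (gbar S (cs + PP S T (q+3)) * FB S (((q+3:ℕ):ℝ)*T))
      ≤ FB S ((q:ℝ)*T) - FB S (((q+3:ℕ):ℝ)*T) := by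
    intro q
    have h1 := hcontr q
    have h2 : FB S (((q+3:ℕ):ℝ)*T) ≤ FB S ((q:ℝ)*T) := hGanti (by omega)
    have h3 := gbar_nonneg S (cs + PP S T (q+3))
    have h4 := hG0 q
    have h5 : cc * (gbar S (cs + PP S T (q+3)) * FB S (((q+3:ℕ):ℝ)*T))
        ≤ cc * (gbar S (cs + PP S T (q+3)) * FB S ((q:ℝ)*T)) :=
      mul_le_mul_of_nonneg_left (mul_le_mul_of_nonneg_left h2 h3) hcc.le
    nlinarith
  -- potential increments
  have hPinc : ∀ q : ℕ, Phi S cs (PP S T (q+3)) ≤ Phi S cs (PP S T q)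
      + 3*T*(gbar S (cs + PP S T q) * FB S ((q:ℝ)*T)) := by
    intro q
    have hPq := PP_succ3 S hN hT q
    have hPm : PP S T q ≤ PP S T (q+3) := PP_mono S hN hT (by omega)
    have hinc := Phi_inc_le S cs hPm
    have hg := gbar_nonneg S (cs + PP S T q)
    have h2 : gbar S (cs + PP S T q) * (PP S T (q+3) - PP S T q)
        ≤ gbar S (cs + PP S T q) * (3*T*FB S ((q:ℝ)*T)) :=
      mul_le_mul_of_nonneg_left (by linarith) hg
    nlinarith
  -- the A constant
  obtain ⟨A, hAdef⟩ : ∃ A, A = Phi S cs (PP S T 2) + 3*T*S.K*FB S ((0:ℝ)*T) := ⟨_, rfl⟩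
  have hPhimono2 : ∀ r : ℕ, r ≤ 2 → Phi S cs (PP S T r) ≤ Phi S cs (PP S T 2) :=
    fun r hr => Phi_mono S cs (PP_mono S hN hT hr)
  have hKg : ∀ z, gbar S z ≤ S.K := gbar_le_K S
  -- key induction
  have key : ∀ r : ℕ, r ≤ 2 → ∀ k : ℕ, Phi S cs (PP S T ((3*k+r)+3))
      ≤ A + (3*T/cc)*(FB S ((r:ℝ)*T) - FB S (((3*k+r:ℕ):ℝ)*T)) := by
    intro r hr
    intro k
    induction k with
    | zero =>
      have hidx : 3*0+r = r := by omega
      rw [hidx]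
      have h1 := hPinc r
      have h2 : gbar S (cs + PP S T r) * FB S ((r:ℝ)*T) ≤ S.K * FB S ((0:ℝ)*T) := by
        have ha := hGanti (show 0 ≤ r by omega)
        have hb : ((0:ℕ):ℝ)*T = (0:ℝ)*T := by norm_num
        rw [hb] at ha
        exact mul_le_mul (hKg (cs + PP S T r)) ha (hG0 r) hK.le
      have h3 : (0:ℝ) ≤ 3*T := by linarith
      rw [hAdef]
      have h4 := hPhimono2 r hr
      nlinarith [mul_le_mul_of_nonneg_left h2 h3]
    | succ k ih =>
      have hidx : 3*(k+1)+r = (3*k+r)+3 := by omega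
      rw [hidx]
      have h1 := hPinc ((3*k+r)+3)
      have h2 := htel (3*k+r)
      -- gbar(cs + P((3k+r)+3)) * G((3k+r)+3) ≤ (G(3k+r) - G((3k+r)+3))/cc
      have h3 : gbar S (cs + PP S T ((3*k+r)+3)) * FB S ((((3*k+r)+3:ℕ):ℝ)*T)
          ≤ (FB S (((3*k+r:ℕ):ℝ)*T) - FB S ((((3*k+r)+3:ℕ):ℝ)*T))/cc := by
        rw [le_div_iff₀ hcc]
        nlinarith [h2]
      have h4 := ih
      have h5 : (0:ℝ) < 3*T/cc := by positivity
      have h6 : (0:ℝ) ≤ 3*T := by linarith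
      have h7 := mul_le_mul_of_nonneg_left h3 h6
      have h8 : 3*T*((FB S (((3*k+r:ℕ):ℝ)*T) - FB S ((((3*k+r)+3:ℕ):ℝ)*T))/cc)
          = (3*T/cc)*(FB S (((3*k+r:ℕ):ℝ)*T) - FB S ((((3*k+r)+3:ℕ):ℝ)*T)) := by
        field_simp
      linarith [h8 ▸ h7]
  -- all PP values have bounded potential
  obtain ⟨B, hBdef⟩ : ∃ B, B = A + (3*T/cc)*FB S ((0:ℝ)*T) := ⟨_, rfl⟩
  have hPhiAll : ∀ m : ℕ, Phi S cs (PP S T m) ≤ B := by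
    intro m
    rcases Nat.lt_or_ge m 3 with hm | hm
    · have h1 : Phi S cs (PP S T m) ≤ Phi S cs (PP S T 2) := hPhimono2 m (by omega)
      have h2 : (0:ℝ) ≤ 3*T*S.K*FB S ((0:ℝ)*T) := by
        have := hG0 0
        simp only [Nat.cast_zero] at this
        positivity
      have h3 : (0:ℝ) ≤ (3*T/cc)*FB S ((0:ℝ)*T) := by
        have := hG0 0
        simp only [Nat.cast_zero] at this
        positivity
      rw [hBdef, hAdef]
      linarith
    · obtain ⟨k, r, hr, hmk⟩ : ∃ k r, r ≤ 2 ∧ m = (3*k+r)+3 := by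
        refine ⟨(m-3)/3, (m-3)%3, by omega, by omega⟩
      rw [hmk]
      have h1 := key r hr k
      have h2 : FB S ((r:ℝ)*T) - FB S (((3*k+r:ℕ):ℝ)*T) ≤ FB S ((0:ℝ)*T) := by
        have ha := hGanti (show 0 ≤ r by omega)
        have hb : ((0:ℕ):ℝ)*T = (0:ℝ)*T := by norm_num
        rw [hb] at ha
        have hc := hG0 (3*k+r)
        linarith
      have h5 : (0:ℝ) ≤ 3*T/cc := by positivity
      rw [hBdef]
      nlinarith [mul_le_mul_of_nonneg_left h2 h5]
  -- conclude via divergence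
  obtain ⟨y, hy0, hyC⟩ := Phi_unbounded S hψdiv hcs0 B
  refine ⟨y, hy0, fun m => ?_⟩
  by_contra hcon
  push_neg at hcon
  have := Phi_mono S cs hcon.le
  linarith [hPhiAll m]


lemma theta_le_half (S : CSD d N) (hN : 2 ≤ N) {T αt η : ℝ} (hT : 0 < T) (hαt : 0 ≤ αt)
    (hαT : αt ≤ T) (hη : 0 ≤ η) (hηK : η ≤ S.K) :
    αt * η * Real.exp (-(7*S.K*T)) / (2*((N:ℝ)-1)) ≤ 1/2 := by
  have hK := K_pos S
  have hNR := Ncast hN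
  obtain ⟨E, hEdef⟩ : ∃ E, E = Real.exp (-(S.K*T)) := ⟨_, rfl⟩
  have hE0 : 0 < E := hEdef ▸ Real.exp_pos _
  have hE1 : E ≤ 1 := by
    rw [hEdef, ← Real.exp_zero]
    exact Real.exp_le_exp.mpr (by nlinarith)
  have hEK : S.K*T*E ≤ 1 := by
    have := xexp_le_one (show (0:ℝ) ≤ S.K*T by positivity)
    rw [hEdef]
    exact this
  have hA1 : αt*η*E ≤ 1 := by
    have h1 : αt*η ≤ S.K*T := by nlinarith
    nlinarith
  have hE7 : Real.exp (-(7*S.K*T)) = E^7 := by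
    rw [hEdef, ← Real.exp_nat_mul]
    congr 1
    push_cast
    ring
  rw [hE7, div_le_div_iff₀ (by linarith) two_pos]
  have h1 : αt*η*E^7 = (αt*η*E)*E^6 := by ring
  have h2 : E^6 ≤ 1 := pow_le_one₀ hE0.le hE1
  have h3 : (0:ℝ) ≤ E^6 := by positivity
  have h4 : 0 ≤ αt*η*E := by positivity
  nlinarith [mul_le_mul hA1 h2 h3 zero_le_one]

end CSDP
set_option maxHeartbeats 1000000 in
/-- exponential flocking with `N`-independent rate for the Cucker-Smale
model with distributed time delay and communication failures. -/
theorem csd_exponential_flocking {d N : ℕ} (S : CSD d N) (hN : 2 ≤ N)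
    (hψdiv : ¬ MeasureTheory.IntegrableOn
      (fun x => sInf (S.ψ '' Set.Icc 0 x)) (Set.Ioi 0))
    (T αt : ℝ) (hT : 0 < T) (hTτ : S.τbar ≤ T) (hαt : 0 < αt)
    (hPE : ∀ t, 0 ≤ t → αt ≤ ∫ s in t..(t + T), S.α s) :
    (∃ ρstar > (0:ℝ), ∀ t, -S.τbar ≤ t → S.dX t ≤ ρstar) ∧
    (∃ ν > (0:ℝ), ∀ t, 0 ≤ t →
      S.dV t ≤
        (sSup {r | ∃ i j : Fin N, ∃ s ∈ Set.Icc (-S.τbar) 0, ∃ u ∈ Set.Icc (-S.τbar) 0,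
          r = ‖S.v i s - S.v j u‖}) * Real.exp (-ν * (t - 3 * T))) := by
  classical
  open CSDP in
  have hK := CSDP.K_pos S
  have hτ := CSDP.taubar_pos S
  have hNR := CSDP.Ncast hN
  have hR0 := CSDP.R0V_nonneg S hN
  have hαT := CSDP.alphaT S hT hPE
  obtain ⟨ystar, hy0, hyP⟩ := CSDP.PP_bounded S hN hψdiv hT hTτ hαt hPE
  constructor
  · refine ⟨ystar + 1, by linarith, fun t ht => ?_⟩
    obtain ⟨m, hm⟩ := exists_nat_ge (t/T)
    have hmT : t ≤ (m:ℝ)*T := by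
      rw [div_le_iff₀ hT] at hm
      linarith
    have := CSDP.le_PP S hN hT m ⟨ht, hmT⟩
    linarith [hyP m]
  · obtain ⟨cs, hcsdef⟩ : ∃ c, c = S.τbar * S.R0V := ⟨_, rfl⟩
    have hcs0 : 0 ≤ cs := by rw [hcsdef]; positivity
    obtain ⟨ηs, hηsdef⟩ : ∃ e, e = CSDP.gbar S (cs + ystar) := ⟨_, rfl⟩
    have hηs_pos : 0 < ηs := hηsdef ▸ CSDP.gbar_pos S _
    have hηsK : ηs ≤ S.K := hηsdef ▸ CSDP.gbar_le_K S _
    obtain ⟨θ, hθdef⟩ : ∃ θ, θ = αt * ηs * Real.exp (-(7*S.K*T)) / (2*((N:ℝ)-1)) := ⟨_, rfl⟩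
    have hθpos : 0 < θ := by
      rw [hθdef]
      have := Real.exp_pos (-(7*S.K*T))
      exact div_pos (by positivity) (by linarith)
    have hθhalf : θ ≤ 1/2 := hθdef ▸ CSDP.theta_le_half S hN hT hαt.le hαT hηs_pos.le hηsK
    have h1θ : 0 < 1 - θ := by linarith
    have h1θ' : 1 - θ < 1 := by linarith
    have hcontr : ∀ q : ℕ, CSDP.FB S (((q+3:ℕ):ℝ)*T) ≤ (1-θ)*CSDP.FB S ((q:ℝ)*T) := by
      intro q
      have hqT : (0:ℝ) ≤ (q:ℝ)*T := by positivity
      have hc := CSDP.contraction S hN hT hTτ hαt hPE (t0 := (q:ℝ)*T) (PX := ystar)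
        (η := ηs) hqT
        (fun t ht' => le_trans
          (CSDP.le_PP S hN hT (q+3) ⟨ht'.1, by push_cast; nlinarith [ht'.2]⟩) (hyP (q+3)))
        hηs_pos.le hηsK hαT
        (fun r hr => by
          rw [hηsdef]
          refine CSDP.gbar_le_psi S r ⟨hr.1, ?_⟩
          rw [hcsdef] at *
          linarith [hr.2])
      have hcast : ((q:ℝ)*T + 3*T) = ((q+3:ℕ):ℝ)*T := by push_cast; ring
      rw [hcast, ← hθdef] at hc
      exact hc
    have hGanti : ∀ {a b : ℕ}, a ≤ b → CSDP.FB S ((b:ℝ)*T) ≤ CSDP.FB S ((a:ℝ)*T) := by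
      intro a b hab
      refine CSDP.FB_antitone S hN (by positivity) ?_
      have : (a:ℝ) ≤ (b:ℝ) := by exact_mod_cast hab
      nlinarith
    have hG0 : ∀ m : ℕ, 0 ≤ CSDP.FB S ((m:ℝ)*T) := fun m => CSDP.FB_nonneg S hN _
    have hFB00 : CSDP.FB S (((0:ℕ):ℝ)*T) = CSDP.FB S ((0:ℝ)*T) := by norm_num
    have hgeo : ∀ r : ℕ, r ≤ 2 → ∀ k : ℕ,
        CSDP.FB S (((3*k+r:ℕ):ℝ)*T) ≤ (1-θ)^k * CSDP.FB S ((0:ℝ)*T) := by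
      intro r hr k
      induction k with
      | zero =>
        have hidx : 3*0+r = r := by omega
        rw [hidx, pow_zero, one_mul]
        have := hGanti (show 0 ≤ r by omega)
        rw [hFB00] at this
        exact this
      | succ k ih =>
        have hidx : 3*(k+1)+r = (3*k+r)+3 := by omega
        rw [hidx]
        have h1 := hcontr (3*k+r)
        have h2 : (1-θ)*CSDP.FB S (((3*k+r:ℕ):ℝ)*T)
            ≤ (1-θ)*((1-θ)^k * CSDP.FB S ((0:ℝ)*T)) :=
          mul_le_mul_of_nonneg_left ih h1θ.le
        calc CSDP.FB S ((((3*k+r)+3:ℕ):ℝ)*T) ≤ (1-θ)*CSDP.FB S (((3*k+r:ℕ):ℝ)*T) := h1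
          _ ≤ (1-θ)*((1-θ)^k * CSDP.FB S ((0:ℝ)*T)) := h2
          _ = (1-θ)^(k+1) * CSDP.FB S ((0:ℝ)*T) := by ring
    obtain ⟨ν, hνdef⟩ : ∃ v, v = -Real.log (1-θ) / (3*T) := ⟨_, rfl⟩
    have hlogneg : Real.log (1-θ) < 0 := Real.log_neg h1θ h1θ'
    have hν : 0 < ν := by
      rw [hνdef]
      exact div_pos (by linarith) (by linarith)
    refine ⟨ν, hν, fun t ht => ?_⟩
    obtain ⟨n, hndef⟩ : ∃ n : ℕ, n = ⌊t/T⌋₊ := ⟨_, rfl⟩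
    have htT : 0 ≤ t/T := by positivity
    have hn1 : (n:ℝ)*T ≤ t := by
      rw [hndef]
      have h1 := Nat.floor_le htT
      calc ((⌊t/T⌋₊:ℝ))*T ≤ (t/T)*T := mul_le_mul_of_nonneg_right h1 hT.le
        _ = t := by field_simp
    have hn2 : t < ((n:ℝ)+1)*T := by
      rw [hndef]
      have h1 := Nat.lt_floor_add_one (t/T)
      have h2 : t/T * T < ((⌊t/T⌋₊:ℝ)+1)*T := by
        exact mul_lt_mul_of_pos_right h1 hT
      rw [div_mul_cancel₀ _ hT.ne'] at h2
      exact h2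
    have hdV : S.dV t ≤ CSDP.FB S ((n:ℝ)*T) :=
      CSDP.dV_le_FB S hN (by positivity) (by linarith)
    obtain ⟨k, r, hr, hnk⟩ : ∃ k r, r ≤ 2 ∧ n = 3*k+r := ⟨n/3, n%3, by omega, by omega⟩
    have hgeo' := hgeo r hr k
    rw [← hnk] at hgeo'
    have hlog : Real.log (1-θ) = -(ν*(3*T)) := by
      rw [hνdef]
      field_simp
    have hpow : (1-θ)^k = Real.exp (-(ν*(3*T))*(k:ℝ)) := by
      rw [← Real.exp_log h1θ, ← Real.exp_nat_mul, hlog]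
      exact congrArg Real.exp (by ring)
    have hexpmono : Real.exp (-(ν*(3*T))*(k:ℝ)) ≤ Real.exp (-ν*(t - 3*T)) := by
      apply Real.exp_le_exp.mpr
      have htk : t - 3*T ≤ 3*T*(k:ℝ) := by
        have h1 : t < ((n:ℝ)+1)*T := hn2
        have h2 : (n:ℝ) = 3*(k:ℝ)+(r:ℝ) := by rw [hnk]; push_cast; ring
        have h3 : (r:ℝ) ≤ 2 := by exact_mod_cast hr
        nlinarith
      nlinarith [hν.le]
    have hFB0nn : 0 ≤ CSDP.FB S ((0:ℝ)*T) := by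
      have := hG0 0
      rwa [hFB00] at this
    have hFB0eq : CSDP.FB S ((0:ℝ)*T)
        = sSup {r | ∃ i j : Fin N, ∃ s ∈ Set.Icc (-S.τbar) 0, ∃ u ∈ Set.Icc (-S.τbar) 0,
          r = ‖S.v i s - S.v j u‖} := by
      simp only [CSDP.FB, zero_mul, zero_sub]
    calc S.dV t ≤ CSDP.FB S ((n:ℝ)*T) := hdV
      _ ≤ (1-θ)^k * CSDP.FB S ((0:ℝ)*T) := hgeo'
      _ ≤ Real.exp (-ν*(t-3*T)) * CSDP.FB S ((0:ℝ)*T) := by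
          refine mul_le_mul_of_nonneg_right ?_ hFB0nn
          rw [hpow]
          exact hexpmono
      _ = (sSup {r | ∃ i j : Fin N, ∃ s ∈ Set.Icc (-S.τbar) 0, ∃ u ∈ Set.Icc (-S.τbar) 0,
          r = ‖S.v i s - S.v j u‖}) * Real.exp (-ν * (t - 3 * T)) := by
          rw [← hFB0eq, mul_comm]
end

section
/- For the distributed-delay Cucker-Smale system, every solution satisfies the uniform velocity bound |v_i(t)| ≤ R_0^V for all t ≥ -τ̄ and all i, where R_0^V = max_j max_{s∈[-τ̄,0]} |v_j(s)|. -/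
open scoped BigOperators RealInnerProductSpace

set_option maxHeartbeats 1000000 in
/-- uniform bound on the agents' velocities for the distributed-delay
Cucker-Smale system. -/
theorem csd_velocity_bound {d N : ℕ} (S : CSD d N) (hN : 2 ≤ N) :
    ∀ i : Fin N, ∀ t, -S.τbar ≤ t → ‖S.v i t‖ ≤ S.R0V := by
  have hNpos : 0 < N := by omega
  have hN1 : (1:ℝ) ≤ (N:ℝ) - 1 := by
    have : (2:ℝ) ≤ (N:ℝ) := by exact_mod_cast hN
    linarith
  -- boundedness of the set defining R0V
  have hset : {r | ∃ j : Fin N, ∃ s ∈ Set.Icc (-S.τbar) 0, r = ‖S.v j s‖}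
      = ⋃ j : Fin N, (fun s => ‖S.v j s‖) '' Set.Icc (-S.τbar) 0 := by
    ext r
    simp only [Set.mem_setOf_eq, Set.mem_iUnion, Set.mem_image]
    constructor
    · rintro ⟨j, s, hs, rfl⟩; exact ⟨j, s, hs, rfl⟩
    · rintro ⟨j, s, hs, rfl⟩; exact ⟨j, s, hs, rfl⟩
  have hbdd : BddAbove {r | ∃ j : Fin N, ∃ s ∈ Set.Icc (-S.τbar) 0, r = ‖S.v j s‖} := by
    rw [hset]
    exact (isCompact_iUnion fun j => isCompact_Icc.image (S.v_cont j).norm).bddAbove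
  have hR0V : ∀ j : Fin N, ∀ s ∈ Set.Icc (-S.τbar) 0, ‖S.v j s‖ ≤ S.R0V := fun j s hs =>
    le_csSup hbdd ⟨j, s, hs, rfl⟩
  have hzero : (0:ℝ) ∈ Set.Icc (-S.τbar) 0 := ⟨neg_nonpos.2 S.τbar_nonneg, le_refl 0⟩
  have hR0V0 : 0 ≤ S.R0V :=
    le_trans (norm_nonneg (S.v ⟨0, hNpos⟩ 0)) (hR0V ⟨0, hNpos⟩ 0 hzero)
  -- bound on ψ
  have hKb : ∀ r, S.ψ r ≤ S.K := fun r => le_csSup S.ψ_bdd ⟨r, rfl⟩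
  have hK0 : 0 < S.K := lt_of_lt_of_le (S.ψ_pos 0) (hKb 0)
  -- main estimate with an epsilon of room
  have main : ∀ ε : ℝ, 0 < ε → ∀ t, 0 ≤ t → ∀ i : Fin N, ‖S.v i t‖ < S.R0V + ε := by
    intro ε hε
    by_contra hcon
    push_neg at hcon
    obtain ⟨t₁, ht₁0, i₁, hi₁⟩ := hcon
    set M := S.R0V + ε with hM
    have hM0 : 0 < M := by positivity
    set E := {t : ℝ | 0 ≤ t ∧ ∃ i : Fin N, M ≤ ‖S.v i t‖} with hE
    have hEne : E.Nonempty := ⟨t₁, ht₁0, i₁, hi₁⟩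
    have hEbdd : BddBelow E := ⟨0, fun x hx => hx.1⟩
    have hEclosed : IsClosed E := by
      have : E = Set.Ici (0:ℝ) ∩ ⋃ i : Fin N, {t | M ≤ ‖S.v i t‖} := by
        ext t
        simp only [hE, Set.mem_setOf_eq, Set.mem_inter_iff, Set.mem_Ici, Set.mem_iUnion]
      rw [this]
      exact isClosed_Ici.inter
        (isClosed_iUnion_of_finite fun i => isClosed_le continuous_const (S.v_cont i).norm)
    set t₀ := sInf E with ht₀def
    have ht₀E : t₀ ∈ E := hEclosed.csInf_mem hEne hEbdd
    obtain ⟨ht₀0, i, hi⟩ := ht₀E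
    have ht₀pos : 0 < t₀ := by
      rcases eq_or_lt_of_le ht₀0 with h | h
      · exfalso
        have h2 := hR0V i 0 hzero
        rw [← h] at hi
        linarith
      · exact h
    -- all velocities before time t₀ are bounded by M
    have hpast : ∀ j : Fin N, ∀ s, -S.τbar ≤ s → s < t₀ → ‖S.v j s‖ ≤ M := by
      intro j s hs1 hs2
      rcases le_or_gt s 0 with h | h
      · exact le_trans (hR0V j s ⟨hs1, h⟩) (by linarith)
      · have hsE : s ∉ E := notMem_of_lt_csInf hs2 hEbdd
        by_contra hc
        push_neg at hc
        exact hsE ⟨h.le, j, hc.le⟩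
    -- the drift field
    set Φ : ℝ → EuclideanSpace ℝ (Fin d) := fun t =>
      ((∫ s in S.τ1 t..S.τ2 t, S.β s)⁻¹ •
        ∑ j ∈ Finset.univ.erase i,
          S.α t • ∫ s in (t - S.τ2 t)..(t - S.τ1 t),
            (S.β (t - s) * (S.ψ ‖S.x i t - S.x j s‖ / ((N : ℝ) - 1))) •
              (S.v j s - S.v i t)) with hΦ
    -- the key differential inequality
    have key : ∀ t, 0 < t → t < t₀ →
        ⟪S.v i t, Φ t⟫ ≤ S.K * (M ^ 2 - ‖S.v i t‖ ^ 2) := by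
      intro t ht0 htt₀
      simp only [hΦ]
      obtain ⟨hτ1nn, hτ12, hτ2b⟩ := S.τ_mem t ht0.le
      set a := t - S.τ2 t with ha
      set b := t - S.τ1 t with hb
      have hab : a ≤ b := by rw [ha, hb]; linarith
      have hnc : ‖S.v i t‖ ≤ M := hpast i t (by linarith [S.τbar_nonneg]) htt₀
      have hcc : 0 ≤ M * ‖S.v i t‖ - ‖S.v i t‖ ^ 2 := by
        nlinarith [norm_nonneg (S.v i t)]
      have hvjs : ∀ j : Fin N, ∀ s ∈ Set.Icc a b, ‖S.v j s‖ ≤ M := by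
        intro j s hs
        refine hpast j s ?_ ?_
        · have := hs.1; rw [ha] at this; linarith
        · have := hs.2; rw [hb] at this; linarith
      -- positivity of the normalization factor
      have hβint : IntervalIntegrable S.β MeasureTheory.volume (S.τ1 t) (S.τ2 t) :=
        S.β_cont.intervalIntegrable _ _
      have hh : 0 < ∫ s in S.τ1 t..S.τ2 t, S.β s := by
        refine intervalIntegral.intervalIntegral_pos_of_pos_on hβint ?_ hτ12
        intro x hx
        exact S.β_pos x ⟨by linarith [hx.1], by linarith [hx.2]⟩
      set h := ∫ s in S.τ1 t..S.τ2 t, S.β s with hhdef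
      -- change of variables for the kernel
      have hsub : (∫ s in a..b, S.β (t - s)) = h := by
        rw [ha, hb, intervalIntegral.integral_comp_sub_left (fun s => S.β s) t,
          sub_sub_cancel, sub_sub_cancel]
      have hβnn : ∀ s ∈ Set.Icc a b, 0 ≤ S.β (t - s) := by
        intro s hs
        refine (S.β_pos (t - s) ⟨?_, ?_⟩).le
        · have := hs.2; rw [hb] at this; linarith
        · have := hs.1; rw [ha] at this; linarith
      obtain ⟨hα0, hα1⟩ := S.α_mem t ht0.le
      -- per-agent estimate
      have hj : ∀ j : Fin N,
          S.α t * ⟪S.v i t, ∫ s in a..b,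
            (S.β (t - s) * (S.ψ ‖S.x i t - S.x j s‖ / ((N : ℝ) - 1))) •
              (S.v j s - S.v i t)⟫
          ≤ h * (S.K / ((N:ℝ) - 1) * (M * ‖S.v i t‖ - ‖S.v i t‖ ^ 2)) := by
        intro j
        set w : ℝ → ℝ :=
          fun s => S.β (t - s) * (S.ψ ‖S.x i t - S.x j s‖ / ((N : ℝ) - 1)) with hw
        have hwcont : Continuous w := by
          apply Continuous.mul
          · exact S.β_cont.comp (continuous_const.sub continuous_id)
          · exact (S.ψ_cont.comp ((continuous_const.sub (S.x_cont j)).norm)).div_const _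
        have hfcont : Continuous fun s => w s • (S.v j s - S.v i t) :=
          hwcont.smul ((S.v_cont j).sub continuous_const)
        have hfint : IntervalIntegrable (fun s => w s • (S.v j s - S.v i t))
            MeasureTheory.volume a b := hfcont.intervalIntegrable _ _
        have hswap : ⟪S.v i t, ∫ s in a..b, w s • (S.v j s - S.v i t)⟫
            = ∫ s in a..b, ⟪S.v i t, w s • (S.v j s - S.v i t)⟫ := by
          have h5 := (innerSL ℝ (S.v i t)).intervalIntegral_comp_comm hfint
          simp only [innerSL_apply_apply] at h5
          exact h5.symm
        have hwnn : ∀ s ∈ Set.Icc a b, 0 ≤ w s := by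
          intro s hs
          exact mul_nonneg (hβnn s hs)
            (div_nonneg (S.ψ_pos _).le (by linarith))
        have hptwise : ∀ s ∈ Set.Icc a b,
            ⟪S.v i t, w s • (S.v j s - S.v i t)⟫
            ≤ S.β (t - s) * (S.K / ((N:ℝ) - 1)) * (M * ‖S.v i t‖ - ‖S.v i t‖ ^ 2) := by
          intro s hs
          rw [real_inner_smul_right]
          have h1 : ⟪S.v i t, S.v j s - S.v i t⟫ ≤ M * ‖S.v i t‖ - ‖S.v i t‖ ^ 2 := by
            rw [inner_sub_right, real_inner_self_eq_norm_sq]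
            have h2 := real_inner_le_norm (S.v i t) (S.v j s)
            have h3 := hvjs j s hs
            nlinarith [norm_nonneg (S.v i t), norm_nonneg (S.v j s)]
          calc w s * ⟪S.v i t, S.v j s - S.v i t⟫
              ≤ w s * (M * ‖S.v i t‖ - ‖S.v i t‖ ^ 2) :=
                mul_le_mul_of_nonneg_left h1 (hwnn s hs)
            _ ≤ S.β (t - s) * (S.K / ((N:ℝ) - 1)) * (M * ‖S.v i t‖ - ‖S.v i t‖ ^ 2) := by
                refine mul_le_mul_of_nonneg_right ?_ hcc
                rw [hw]
                refine mul_le_mul_of_nonneg_left ?_ (hβnn s hs)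
                exact (div_le_div_iff_of_pos_right (by linarith)).2 (hKb _)
        have hinncont : Continuous fun s => ⟪S.v i t, w s • (S.v j s - S.v i t)⟫ :=
          continuous_const.inner hfcont
        have hrhsint : IntervalIntegrable
            (fun s => S.β (t - s) * (S.K / ((N:ℝ) - 1)) * (M * ‖S.v i t‖ - ‖S.v i t‖ ^ 2))
            MeasureTheory.volume a b :=
          (((S.β_cont.comp (continuous_const.sub continuous_id)).mul
            continuous_const).mul continuous_const).intervalIntegrable _ _
        have hIle : (∫ s in a..b, ⟪S.v i t, w s • (S.v j s - S.v i t)⟫)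
            ≤ ∫ s in a..b,
              S.β (t - s) * (S.K / ((N:ℝ) - 1)) * (M * ‖S.v i t‖ - ‖S.v i t‖ ^ 2) :=
          intervalIntegral.integral_mono_on hab (hinncont.intervalIntegrable _ _)
            hrhsint hptwise
        have hIval : (∫ s in a..b,
              S.β (t - s) * (S.K / ((N:ℝ) - 1)) * (M * ‖S.v i t‖ - ‖S.v i t‖ ^ 2))
            = h * (S.K / ((N:ℝ) - 1) * (M * ‖S.v i t‖ - ‖S.v i t‖ ^ 2)) := by
          simp only [mul_assoc]
          rw [intervalIntegral.integral_mul_const, hsub]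
        have hB0 : 0 ≤ h * (S.K / ((N:ℝ) - 1) * (M * ‖S.v i t‖ - ‖S.v i t‖ ^ 2)) :=
          mul_nonneg hh.le (mul_nonneg (div_nonneg hK0.le (by linarith)) hcc)
        have hmain : ⟪S.v i t, ∫ s in a..b, w s • (S.v j s - S.v i t)⟫
            ≤ h * (S.K / ((N:ℝ) - 1) * (M * ‖S.v i t‖ - ‖S.v i t‖ ^ 2)) := by
          rw [hswap]
          exact le_trans hIle hIval.le
        show S.α t * ⟪S.v i t, ∫ s in a..b, w s • (S.v j s - S.v i t)⟫
            ≤ h * (S.K / ((N:ℝ) - 1) * (M * ‖S.v i t‖ - ‖S.v i t‖ ^ 2))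
        calc S.α t * ⟪S.v i t, ∫ s in a..b, w s • (S.v j s - S.v i t)⟫
            ≤ S.α t * (h * (S.K / ((N:ℝ) - 1) * (M * ‖S.v i t‖ - ‖S.v i t‖ ^ 2))) :=
              mul_le_mul_of_nonneg_left hmain hα0
          _ ≤ 1 * (h * (S.K / ((N:ℝ) - 1) * (M * ‖S.v i t‖ - ‖S.v i t‖ ^ 2))) :=
              mul_le_mul_of_nonneg_right hα1 hB0
          _ = h * (S.K / ((N:ℝ) - 1) * (M * ‖S.v i t‖ - ‖S.v i t‖ ^ 2)) := one_mul _
      -- sum the per-agent estimates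
      rw [real_inner_smul_right, inner_sum]
      simp only [real_inner_smul_right]
      have hcard : (Finset.univ.erase i).card = N - 1 := by
        rw [Finset.card_erase_of_mem (Finset.mem_univ i), Finset.card_univ, Fintype.card_fin]
      have hsum : (∑ j ∈ Finset.univ.erase i, S.α t *
            ⟪S.v i t, ∫ s in a..b,
              (S.β (t - s) * (S.ψ ‖S.x i t - S.x j s‖ / ((N : ℝ) - 1))) •
                (S.v j s - S.v i t)⟫)
          ≤ ((N:ℝ) - 1) * (h * (S.K / ((N:ℝ) - 1) * (M * ‖S.v i t‖ - ‖S.v i t‖ ^ 2))) := by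
        calc (∑ j ∈ Finset.univ.erase i, S.α t *
              ⟪S.v i t, ∫ s in a..b,
                (S.β (t - s) * (S.ψ ‖S.x i t - S.x j s‖ / ((N : ℝ) - 1))) •
                  (S.v j s - S.v i t)⟫)
            ≤ ∑ _j ∈ Finset.univ.erase i,
              h * (S.K / ((N:ℝ) - 1) * (M * ‖S.v i t‖ - ‖S.v i t‖ ^ 2)) :=
              Finset.sum_le_sum fun j _ => hj j
          _ = (Finset.univ.erase i).card •
              (h * (S.K / ((N:ℝ) - 1) * (M * ‖S.v i t‖ - ‖S.v i t‖ ^ 2))) :=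
              Finset.sum_const _
          _ = ((N:ℝ) - 1) * (h * (S.K / ((N:ℝ) - 1) * (M * ‖S.v i t‖ - ‖S.v i t‖ ^ 2))) := by
              rw [hcard, nsmul_eq_mul, Nat.cast_sub (by omega), Nat.cast_one]
      have hhne : h ≠ 0 := ne_of_gt hh
      have hNne : (N:ℝ) - 1 ≠ 0 := by linarith
      have hfinal : h⁻¹ * (((N:ℝ) - 1) *
            (h * (S.K / ((N:ℝ) - 1) * (M * ‖S.v i t‖ - ‖S.v i t‖ ^ 2))))
          = S.K * (M * ‖S.v i t‖ - ‖S.v i t‖ ^ 2) := by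
        field_simp
      calc h⁻¹ * (∑ j ∈ Finset.univ.erase i, S.α t *
              ⟪S.v i t, ∫ s in a..b,
                (S.β (t - s) * (S.ψ ‖S.x i t - S.x j s‖ / ((N : ℝ) - 1))) •
                  (S.v j s - S.v i t)⟫)
          ≤ h⁻¹ * (((N:ℝ) - 1) *
              (h * (S.K / ((N:ℝ) - 1) * (M * ‖S.v i t‖ - ‖S.v i t‖ ^ 2)))) :=
            mul_le_mul_of_nonneg_left hsum (inv_nonneg.2 hh.le)
        _ = S.K * (M * ‖S.v i t‖ - ‖S.v i t‖ ^ 2) := hfinal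
        _ ≤ S.K * (M ^ 2 - ‖S.v i t‖ ^ 2) := by
            nlinarith [mul_le_mul_of_nonneg_left hnc (mul_nonneg hK0.le hM0.le)]
    -- the comparison function
    set F : ℝ → ℝ := fun u => (⟪S.v i u, S.v i u⟫ - M ^ 2) * Real.exp (2 * S.K * u) with hF
    have hF' : ∀ x ∈ Set.Ioo (0:ℝ) t₀, HasDerivAt F
        (2 * ⟪S.v i x, Φ x⟫ * Real.exp (2 * S.K * x)
          + (⟪S.v i x, S.v i x⟫ - M ^ 2) * (Real.exp (2 * S.K * x) * (2 * S.K * 1))) x := by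
      intro x hx
      have hv : HasDerivAt (S.v i) (Φ x) x := by
        simp only [hΦ]
        exact S.v_deriv i x hx.1
      have h1 : HasDerivAt (fun u => ⟪S.v i u, S.v i u⟫ - M ^ 2) (2 * ⟪S.v i x, Φ x⟫) x := by
        have h2 := (hv.inner ℝ hv).sub_const (M ^ 2)
        refine h2.congr_deriv ?_
        rw [real_inner_comm (Φ x) (S.v i x)]
        ring
      have h3 : HasDerivAt (fun u => Real.exp (2 * S.K * u))
          (Real.exp (2 * S.K * x) * (2 * S.K * 1)) x :=
        ((hasDerivAt_id x).const_mul (2 * S.K)).exp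
      exact h1.mul h3
    have hFcont : Continuous F := by
      rw [hF]
      exact (((S.v_cont i).inner (S.v_cont i)).sub continuous_const).mul
        (Real.continuous_exp.comp (continuous_const.mul continuous_id))
    have hanti : AntitoneOn F (Set.Icc 0 t₀) := by
      refine antitoneOn_of_deriv_nonpos (convex_Icc 0 t₀) hFcont.continuousOn ?_ ?_
      · intro x hx
        rw [interior_Icc] at hx
        exact (hF' x hx).differentiableAt.differentiableWithinAt
      · intro x hx
        rw [interior_Icc] at hx
        rw [(hF' x hx).deriv]
        have hkey := key x hx.1 hx.2
        have hgx : ⟪S.v i x, S.v i x⟫ = ‖S.v i x‖ ^ 2 := real_inner_self_eq_norm_sq _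
        have hexp : (0:ℝ) < Real.exp (2 * S.K * x) := Real.exp_pos _
        rw [hgx]
        nlinarith [mul_le_mul_of_nonneg_right hkey hexp.le]
    have hFle : F t₀ ≤ F 0 := hanti ⟨le_refl 0, ht₀0⟩ ⟨ht₀0, le_refl t₀⟩ ht₀0
    have hF0 : F 0 < 0 := by
      simp only [hF, mul_zero, Real.exp_zero, mul_one]
      have hg0 : ⟪S.v i 0, S.v i 0⟫ = ‖S.v i 0‖ ^ 2 := real_inner_self_eq_norm_sq _
      rw [hg0]
      have h4 := hR0V i 0 hzero
      nlinarith [norm_nonneg (S.v i 0)]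
    have hFt₀ : 0 ≤ F t₀ := by
      simp only [hF]
      have hg0 : ⟪S.v i t₀, S.v i t₀⟫ = ‖S.v i t₀‖ ^ 2 := real_inner_self_eq_norm_sq _
      rw [hg0]
      have hexp : (0:ℝ) < Real.exp (2 * S.K * t₀) := Real.exp_pos _
      have h5 : M ^ 2 ≤ ‖S.v i t₀‖ ^ 2 := by nlinarith [hi, hM0]
      exact mul_nonneg (by linarith) hexp.le
    linarith
  -- conclude
  intro i t ht
  rcases le_or_gt t 0 with h | h
  · exact hR0V i t ⟨ht, h⟩
  · by_contra hc
    push_neg at hc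
    have := main (‖S.v i t‖ - S.R0V) (by linarith) t h.le i
    linarith
end
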